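/- arXiv:2605.07410 — 6 statements merged into one kernel-verified Lean document; each statement's English description precedes it below -/
import Mathlib

section
/- Let 𝔄 be a complex unital Banach algebra, let a, b ∈ 𝔄, and let S > 0. Write ad_a(x) := a·x − x·a and suppose that for every natural number n one has ‖ad_aⁿ(b)‖ ≤ n!·‖b‖·S^{−n}. Then for every s ∈ ℂ with |s| < S, ‖exp(s·a)·b·exp(−s·a)‖ ≤ ‖b‖ / (1 − |s|/S). -/
/-!
Write `ad_a = L_a - R_a` with `L_a x = a x` and `R_a x = x a`. The operators `L_a` and `R_a`
commute, and `exp L_a = L_{exp a}`, `exp (-R_a) = R_{exp (-a)}`, so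
`exp (s a) b exp (-s a) = exp (s ad_a) b = ∑ sⁿ/n! ad_aⁿ b`. The hypothesis bounds the `n`-th term
by `‖b‖ (|s|/S)ⁿ`, and the geometric series sums to `‖b‖ / (1 - |s|/S)`.
-/

open NormedSpace ContinuousLinearMap
open scoped Nat

noncomputable section

variable (𝕜 : Type*) [RCLike 𝕜] {A : Type*} [NormedRing A] [NormedAlgebra 𝕜 A]

lemma mem_eball_expSeries_radius {B : Type*} [NormedRing B] [NormedAlgebra 𝕜 B] (x : B) :
    x ∈ Metric.eball (0 : B) (expSeries 𝕜 B).radius :=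
  (expSeries_radius_eq_top 𝕜 B).symm ▸ edist_lt_top _ _

variable (A) in
def mulLeftRingHom : A →+* (A →L[𝕜] A) where
  toFun := mul 𝕜 A
  map_one' := by ext; simp
  map_mul' x y := by ext; simp [mul_assoc]
  map_zero' := by simp
  map_add' := by simp

variable (A) in
def mulRightRingHom : Aᵐᵒᵖ →+* (A →L[𝕜] A) where
  toFun x := (mul 𝕜 A).flip x.unop
  map_one' := by ext; simp
  map_mul' x y := by ext; simp [mul_assoc]
  map_zero' := by simp
  map_add' := by simp

variable (A) in
def adCLM : A →L[𝕜] A →L[𝕜] A := mul 𝕜 A - (mul 𝕜 A).flip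

lemma adCLM_pow_apply (a x : A) (n : ℕ) :
    (adCLM 𝕜 A a ^ n) x = (fun y => a * y - y * a)^[n] x := by
  rw [FunLike.coe_pow_eq_iterate]
  congr

lemma commute_mul_left_mul_right (a c : A) : Commute (mul 𝕜 A a) ((mul 𝕜 A).flip c) := by
  ext x
  simp [mul_assoc]

variable [CompleteSpace A]

lemma exp_mul_left (x : A) : exp (mul 𝕜 A x) = mul 𝕜 A (exp x) :=
  (map_exp_of_mem_ball (mulLeftRingHom 𝕜 A) (mul 𝕜 A).continuous x
    (mem_eball_expSeries_radius 𝕜 x)).symm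

lemma exp_mul_right (x : A) : exp ((mul 𝕜 A).flip x) = (mul 𝕜 A).flip (exp x) := by
  have h := map_exp_of_mem_ball (mulRightRingHom 𝕜 A)
    ((mul 𝕜 A).flip.continuous.comp MulOpposite.continuous_unop) (MulOpposite.op x)
    (mem_eball_expSeries_radius 𝕜 _)
  rw [exp_op] at h
  exact h.symm

lemma exp_adCLM_apply (a b : A) : exp (adCLM 𝕜 A a) b = exp a * b * exp (-a) := by
  have hsplit : adCLM 𝕜 A a = mul 𝕜 A a + (mul 𝕜 A).flip (-a) := by
    simp [adCLM, sub_eq_add_neg]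
  rw [hsplit, exp_add_of_commute_of_mem_ball (commute_mul_left_mul_right 𝕜 a (-a))
    (mem_eball_expSeries_radius 𝕜 _) (mem_eball_expSeries_radius 𝕜 _),
    exp_mul_left, exp_mul_right]
  simp [mul_assoc]

end

lemma norm_exp_smul_apply_le {𝕜 E : Type*} [RCLike 𝕜] [NormedAddCommGroup E] [NormedSpace 𝕜 E]
    [CompleteSpace E] (T : E →L[𝕜] E) (x : E) {C S : ℝ} (hS : 0 < S)
    (hT : ∀ n : ℕ, ‖(T ^ n) x‖ ≤ n ! * C / S ^ n) {s : 𝕜} (hs : ‖s‖ < S) :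
    ‖exp (s • T) x‖ ≤ C / (1 - ‖s‖ / S) := by
  set r := ‖s‖ / S
  have hr₀ : 0 ≤ r := by positivity
  have hr₁ : r < 1 := (div_lt_one hS).mpr hs
  have hexp : HasSum (fun n : ℕ => (n !⁻¹ : 𝕜) • (s ^ n • (T ^ n) x)) (exp (s • T) x) := by
    simpa [smul_pow] using (apply 𝕜 E x).hasSum (exp_series_hasSum_exp' (𝕂 := 𝕜) (s • T))
  have hterm (n : ℕ) : ‖(n !⁻¹ : 𝕜) • (s ^ n • (T ^ n) x)‖ ≤ r ^ n * C := by
    rw [norm_smul, norm_smul, norm_inv, norm_pow, RCLike.norm_natCast]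
    calc (n ! : ℝ)⁻¹ * (‖s‖ ^ n * ‖(T ^ n) x‖)
        ≤ (n ! : ℝ)⁻¹ * (‖s‖ ^ n * (n ! * C / S ^ n)) := by gcongr; exact hT n
      _ = r ^ n * C := by simp only [r, div_pow]; field_simp
  rw [div_eq_inv_mul]
  exact hexp.norm_le_of_bounded ((hasSum_geometric_of_lt_one hr₀ hr₁).mul_right C) hterm

/-- Hadamard-type bound: if the iterated commutators of `a` with `b` satisfy
`‖ad_aⁿ(b)‖ ≤ n!·‖b‖·S^{−n}`, then for `|s| < S`,
`‖exp(s·a)·b·exp(−s·a)‖ ≤ ‖b‖/(1 − |s|/S)`. -/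
theorem stmt_4 {A : Type*} [NormedRing A] [NormedAlgebra ℂ A] [CompleteSpace A]
    (a b : A) (S : ℝ) (hS : 0 < S)
    (had : ∀ n : ℕ, ‖(fun x => a * x - x * a)^[n] b‖ ≤ (n.factorial : ℝ) * ‖b‖ / S ^ n) :
    ∀ s : ℂ, ‖s‖ < S →
      ‖NormedSpace.exp (s • a) * b * NormedSpace.exp (-(s • a))‖ ≤
        ‖b‖ / (1 - ‖s‖ / S) := by
  intro s hs
  rw [← exp_adCLM_apply ℂ, map_smul]
  refine norm_exp_smul_apply_le _ b hS (fun n => ?_) hs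
  rw [adCLM_pow_apply]
  exact had n
end

section
/- Let V be a finite-dimensional complex inner product space, let H' and B be self-adjoint linear endomorphisms of V, set H := H' + B, and let λ > 0. Assume the real Hadamard bound: for every u ∈ [0, λ], ‖e^{uH}·B·e^{−uH}‖ ≤ 2‖B‖. Then for every linear endomorphism A of V and all M, N ∈ ℝ, ‖E^H([M,∞))·A·E^H((−∞,N])‖ ≤ exp(−λ(M − N − 4‖B‖))·‖e^{λH'}·A·e^{−λH'}‖. -/
/-- The spectral projection `E^T(I)` of an endomorphism `T` of a finite-dimensional
complex inner product space: the orthogonal projection onto the span of all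
eigenvectors of `T` whose eigenvalue lies in `I ⊆ ℝ`. -/
noncomputable def specProj {V : Type*} [NormedAddCommGroup V] [InnerProductSpace ℂ V]
    [FiniteDimensional ℂ V] (T : V →L[ℂ] V) (I : Set ℝ) : V →L[ℂ] V :=
  (⨆ μ ∈ I, Module.End.eigenspace (↑T : V →ₗ[ℂ] V) (μ : ℂ)).subtypeL.comp
    (Submodule.orthogonalProjectionOnto (⨆ μ ∈ I, Module.End.eigenspace (↑T : V →ₗ[ℂ] V) (μ : ℂ)))

/-!
With `P = E^H([M,∞))` and `Q = E^H((-∞,N])`,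
`P A Q = (P e^{-λH}) (e^{λH} e^{-λH'}) (e^{λH'} A e^{-λH'}) (e^{λH'} e^{-λH}) (e^{λH} Q)`.
Diagonalising `H`, `‖P e^{-λH}‖ ≤ e^{-λM}` and `‖e^{λH} Q‖ ≤ e^{λN}`. The two mixed factors are
at most `e^{2λ‖B‖}` by Grönwall: `u ↦ e^{uH} e^{-uH'}` has derivative
`(e^{uH} B e^{-uH}) (e^{uH} e^{-uH'})`, and the Hadamard bound controls the first factor by `2‖B‖`;
likewise for `u ↦ e^{uH'} e^{-uH}`.
-/

open NormedSpace

section BanachAlgebra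

variable {𝔸 : Type*} [NormedRing 𝔸] [NormedAlgebra ℝ 𝔸] [CompleteSpace 𝔸]

theorem mul_exp_neg_mul_exp (a x : 𝔸) : a * exp (-x) * exp x = a := by
  let +nondep : NormedAlgebra ℚ 𝔸 := .restrictScalars ℚ ℝ 𝔸
  rw [mul_assoc, ← exp_add_of_commute (Commute.refl x).neg_left, neg_add_cancel, exp_zero,
    mul_one]

theorem hasDerivAt_exp_smul_mul_exp_neg_smul (a b : 𝔸) (t : ℝ) :
    HasDerivAt (fun s : ℝ => exp (s • a) * exp (-(s • b)))
      (exp (t • a) * (a - b) * exp (-(t • b))) t := by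
  have hb : HasDerivAt (fun s : ℝ => exp (-(s • b))) (exp (-(t • b)) * -b) t := by
    simpa only [smul_neg] using hasDerivAt_exp_smul_const (-b) t
  refine ((hasDerivAt_exp_smul_const a t).mul hb).congr_deriv ?_
  rw [((Commute.refl b).smul_left t).neg_left.exp_left.neg_right.eq]
  noncomm_ring

end BanachAlgebra

theorem exp_apply_of_apply_eq_smul {𝕜 E : Type*} [RCLike 𝕜] [NormedAddCommGroup E]
    [NormedSpace 𝕜 E] [CompleteSpace E] {T : E →L[𝕜] E} {μ : 𝕜} {v : E} (h : T v = μ • v) :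
    exp T v = exp μ • v := by
  have hpow : ∀ n : ℕ, (T ^ n) v = μ ^ n • v := by
    intro n
    induction n with
    | zero => simp
    | succ n ih =>
      rw [pow_succ, mul_apply_eq_comp, h, map_smul, ih, smul_smul, pow_succ']
  have hT := (exp_series_hasSum_exp' (𝕂 := 𝕜) T).mapL (ContinuousLinearMap.apply 𝕜 E v)
  have hμ := (exp_series_hasSum_exp' (𝕂 := 𝕜) μ).smul_const v
  refine hT.unique (hμ.congr_fun fun n => ?_)
  simp only [ContinuousLinearMap.apply_apply, smul_apply, hpow, smul_smul,
    smul_eq_mul]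

theorem OrthonormalBasis.opNorm_le_of_apply_eq_smul {𝕜 E ι : Type*} [RCLike 𝕜]
    [NormedAddCommGroup E] [InnerProductSpace 𝕜 E] [Fintype ι] (b : OrthonormalBasis ι 𝕜 E)
    {F : E →L[𝕜] E} {d : ι → 𝕜} (hF : ∀ i, F (b i) = d i • b i) {c : ℝ} (hc : 0 ≤ c)
    (hd : ∀ i, ‖d i‖ ≤ c) : ‖F‖ ≤ c := by
  refine F.opNorm_le_bound hc fun x => ?_
  have hrepr : ∀ i, b.repr (F x) i = d i * b.repr x i := by
    intro i
    conv_lhs => rw [b.repr_apply_apply, ← b.sum_repr x]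
    simp only [map_sum, map_smul, hF, smul_smul, b.orthonormal.inner_right_fintype, mul_comm]
  rw [← b.repr.norm_map (F x), ← b.repr.norm_map x, EuclideanSpace.norm_eq,
    EuclideanSpace.norm_eq, ← Real.sqrt_sq hc, ← Real.sqrt_mul (sq_nonneg c), Finset.mul_sum]
  gcongr with i
  rw [hrepr, norm_mul, mul_pow]
  gcongr
  exact hd i

section Operators

variable {E : Type*} [NormedAddCommGroup E] [NormedSpace ℂ E] [CompleteSpace E]

theorem norm_exp_smul_mul_exp_neg_smul_le {a b : E →L[ℂ] E} {lam K : ℝ} (hlam : 0 ≤ lam)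
    (hderiv : ∀ u ∈ Set.Ico 0 lam,
      ‖exp (u • a) * (a - b) * exp (-(u • b))‖ ≤ K * ‖exp (u • a) * exp (-(u • b))‖) :
    ‖exp (lam • a) * exp (-(lam • b))‖ ≤ Real.exp (K * lam) := by
  have hasDeriv := hasDerivAt_exp_smul_mul_exp_neg_smul a b
  have hinit : ‖exp ((0 : ℝ) • a) * exp (-((0 : ℝ) • b))‖ ≤ 1 := by
    rw [zero_smul, zero_smul, neg_zero, exp_zero, mul_one]
    exact ContinuousLinearMap.norm_id_le
  have hgronwall := norm_le_gronwallBound_of_norm_deriv_right_le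
    (fun u _ => (hasDeriv u).continuousAt.continuousWithinAt)
    (fun u _ => (hasDeriv u).hasDerivWithinAt) hinit
    (fun u hu => (hderiv u hu).trans_eq (add_zero _).symm) lam ⟨hlam, le_rfl⟩
  simpa only [gronwallBound_ε0, sub_zero, one_mul] using hgronwall

theorem norm_exp_smul_mul_exp_neg_smul_le_of_norm_conj_le {a b : E →L[ℂ] E} {lam K : ℝ}
    (hlam : 0 ≤ lam)
    (hconj : ∀ u ∈ Set.Icc 0 lam, ‖exp (u • a) * (a - b) * exp (-(u • a))‖ ≤ K) :
    ‖exp (lam • a) * exp (-(lam • b))‖ ≤ Real.exp (K * lam) := by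
  refine norm_exp_smul_mul_exp_neg_smul_le hlam fun u hu => ?_
  calc ‖exp (u • a) * (a - b) * exp (-(u • b))‖
      = ‖exp (u • a) * (a - b) * exp (-(u • a)) * (exp (u • a) * exp (-(u • b)))‖ := by
        simp only [← mul_assoc, mul_exp_neg_mul_exp]
    _ ≤ K * ‖exp (u • a) * exp (-(u • b))‖ := by
        grw [norm_mul_le, hconj u (Set.Ico_subset_Icc_self hu)]

theorem norm_exp_smul_mul_exp_neg_smul_le_of_norm_conj_le' {a b : E →L[ℂ] E} {lam K : ℝ}
    (hlam : 0 ≤ lam)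
    (hconj : ∀ u ∈ Set.Icc 0 lam, ‖exp (u • a) * (a - b) * exp (-(u • a))‖ ≤ K) :
    ‖exp (lam • b) * exp (-(lam • a))‖ ≤ Real.exp (K * lam) := by
  refine norm_exp_smul_mul_exp_neg_smul_le hlam fun u hu => ?_
  calc ‖exp (u • b) * (b - a) * exp (-(u • a))‖
      = ‖exp (u • b) * exp (-(u • a)) * -(exp (u • a) * (a - b) * exp (-(u • a)))‖ := by
        rw [← neg_sub a b]
        simp only [mul_neg, neg_mul, ← mul_assoc, mul_exp_neg_mul_exp]
    _ ≤ K * ‖exp (u • b) * exp (-(u • a))‖ := by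
        grw [norm_mul_le, norm_neg, hconj u (Set.Ico_subset_Icc_self hu), mul_comm]

theorem exp_smul_apply_of_apply_eq {T : E →L[ℂ] E} {μ : ℝ} {v : E} (t : ℝ)
    (h : T v = (μ : ℂ) • v) : exp (t • T) v = (Real.exp (t * μ) : ℂ) • v := by
  have htT : (t • T) v = ((t * μ : ℝ) : ℂ) • v := by
    rw [smul_apply, h, ← Complex.coe_smul, smul_smul, Complex.ofReal_mul]
  rw [exp_apply_of_apply_eq_smul htT, ← Complex.exp_eq_exp_ℂ, Complex.ofReal_exp]

end Operators

section Spectral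

variable {V : Type*} [NormedAddCommGroup V] [InnerProductSpace ℂ V] [FiniteDimensional ℂ V]
  {T : V →L[ℂ] V} {I : Set ℝ} {μ : ℝ} {v : V}

theorem specProj_eq_starProjection :
    specProj T I = (⨆ μ ∈ I, Module.End.eigenspace (T : V →ₗ[ℂ] V) (μ : ℂ)).starProjection :=
  rfl

theorem specProj_apply_of_mem (hμ : μ ∈ I)
    (hv : v ∈ Module.End.eigenspace (T : V →ₗ[ℂ] V) (μ : ℂ)) : specProj T I v = v := by
  rw [specProj_eq_starProjection, Submodule.starProjection_eq_self_iff]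
  exact le_iSup₂ (f := fun (μ : ℝ) (_ : μ ∈ I) => Module.End.eigenspace (T : V →ₗ[ℂ] V) μ)
    μ hμ hv

theorem specProj_apply_of_notMem (hT : IsSelfAdjoint T) (hμ : μ ∉ I)
    (hv : v ∈ Module.End.eigenspace (T : V →ₗ[ℂ] V) (μ : ℂ)) : specProj T I v = 0 := by
  rw [specProj_eq_starProjection, Submodule.starProjection_apply_eq_zero_iff]
  refine Submodule.isOrtho_iff_le.mp ?_ hv
  refine Submodule.isOrtho_iSup_right.mpr fun μ' => Submodule.isOrtho_iSup_right.mpr fun hμ' => ?_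
  have hsym := ContinuousLinearMap.isSelfAdjoint_iff_isSymmetric.mp hT
  refine hsym.orthogonalFamily_eigenspaces.isOrtho ?_
  exact_mod_cast (ne_of_mem_of_not_mem hμ' hμ).symm

theorem norm_exp_smul_mul_specProj_le (hT : IsSelfAdjoint T) {t c : ℝ}
    (hc : ∀ μ ∈ I, t * μ ≤ c) : ‖exp (t • T) * specProj T I‖ ≤ Real.exp c := by
  classical
  have hsym := ContinuousLinearMap.isSelfAdjoint_iff_isSymmetric.mp hT
  let b := hsym.eigenvectorBasis rfl
  let μ := hsym.eigenvalues rfl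
  refine b.opNorm_le_of_apply_eq_smul
    (d := fun i => if μ i ∈ I then (Real.exp (t * μ i) : ℂ) else 0) (fun i => ?_)
    (Real.exp_pos c).le (fun i => ?_)
  · have hv := hsym.hasEigenvector_eigenvectorBasis rfl i
    rw [mul_apply_eq_comp]
    split_ifs with hi
    · rw [specProj_apply_of_mem hi hv.1, exp_smul_apply_of_apply_eq (μ := μ i) t hv.apply_eq_smul]
    · rw [specProj_apply_of_notMem hT hi hv.1, map_zero, zero_smul]
  · split_ifs with hi
    · rw [Complex.norm_real, Real.norm_of_nonneg (Real.exp_pos _).le]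
      exact Real.exp_le_exp.2 (hc _ hi)
    · simpa using (Real.exp_pos c).le

theorem norm_specProj_mul_exp_smul_le (hT : IsSelfAdjoint T) {t c : ℝ}
    (hc : ∀ μ ∈ I, t * μ ≤ c) : ‖specProj T I * exp (t • T)‖ ≤ Real.exp c := by
  have hP : IsSelfAdjoint (specProj T I) := isSelfAdjoint_starProjection _
  rw [← norm_star, star_mul, hP.star_eq, (((IsSelfAdjoint.all t).smul hT).exp).star_eq]
  exact norm_exp_smul_mul_specProj_le hT hc

end Spectral

/-- Off-diagonal estimate (finite volume, AKL Thm 2.1/5.1 form): under the real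
Hadamard bound for `e^{uH} B e^{−uH}` on `[0,λ]`, with `H = H' + B`,
`‖E^H([M,∞))·A·E^H((−∞,N])‖ ≤ e^{−λ(M−N−4‖B‖)}·‖e^{λH'} A e^{−λH'}‖`. -/
theorem stmt_5 {V : Type*} [NormedAddCommGroup V] [InnerProductSpace ℂ V]
    [FiniteDimensional ℂ V]
    (H' B : V →L[ℂ] V) (hH' : IsSelfAdjoint H') (hB : IsSelfAdjoint B)
    (lam : ℝ) (hlam : 0 < lam)
    (hHad : ∀ u ∈ Set.Icc (0 : ℝ) lam,
      ‖NormedSpace.exp ((u : ℂ) • (H' + B)) * B *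
          NormedSpace.exp (-((u : ℂ) • (H' + B)))‖ ≤ 2 * ‖B‖) :
    ∀ (A : V →L[ℂ] V) (M N : ℝ),
      ‖specProj (H' + B) (Set.Ici M) * A * specProj (H' + B) (Set.Iic N)‖ ≤
        Real.exp (-lam * (M - N - 4 * ‖B‖)) *
          ‖NormedSpace.exp ((lam : ℂ) • H') * A *
              NormedSpace.exp (-((lam : ℂ) • H'))‖ := by
  intro A M N
  simp only [Complex.coe_smul] at hHad ⊢
  set H := H' + B
  have hH : IsSelfAdjoint H := hH'.add hB
  have hconj : ∀ u ∈ Set.Icc 0 lam, ‖exp (u • H) * (H - H') * exp (-(u • H))‖ ≤ 2 * ‖B‖ := by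
    simpa only [H, add_sub_cancel_left] using hHad
  calc ‖specProj H (Set.Ici M) * A * specProj H (Set.Iic N)‖
      = ‖specProj H (Set.Ici M) * exp ((-lam) • H) * (exp (lam • H) * exp (-(lam • H')))
          * (exp (lam • H') * A * exp (-(lam • H'))) * (exp (lam • H') * exp (-(lam • H)))
          * (exp (lam • H) * specProj H (Set.Iic N))‖ := by
        simp only [neg_smul, ← mul_assoc, mul_exp_neg_mul_exp]
    _ ≤ ‖specProj H (Set.Ici M) * exp ((-lam) • H)‖ * ‖exp (lam • H) * exp (-(lam • H'))‖
          * ‖exp (lam • H') * A * exp (-(lam • H'))‖ * ‖exp (lam • H') * exp (-(lam • H))‖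
          * ‖exp (lam • H) * specProj H (Set.Iic N)‖ := by
        grw [norm_mul_le, norm_mul_le, norm_mul_le, norm_mul_le]
    _ ≤ Real.exp (-lam * M) * Real.exp (2 * ‖B‖ * lam) * ‖exp (lam • H') * A * exp (-(lam • H'))‖
          * Real.exp (2 * ‖B‖ * lam) * Real.exp (lam * N) := by
        gcongr
        · exact norm_specProj_mul_exp_smul_le hH fun μ hμ => by nlinarith [hμ.out]
        · exact norm_exp_smul_mul_exp_neg_smul_le_of_norm_conj_le hlam.le hconj
        · exact norm_exp_smul_mul_exp_neg_smul_le_of_norm_conj_le' hlam.le hconj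
        · exact norm_exp_smul_mul_specProj_le hH fun μ hμ => by nlinarith [hμ.out]
    _ = Real.exp (-lam * (M - N - 4 * ‖B‖)) * ‖exp (lam • H') * A * exp (-(lam • H'))‖ := by
        rw [show -lam * (M - N - 4 * ‖B‖) = -lam * M + 2 * ‖B‖ * lam + 2 * ‖B‖ * lam + lam * N by
          ring]
        simp only [Real.exp_add]
        ring
end

section
/- Let V be a finite-dimensional complex inner product space, let H' and B be self-adjoint linear endomorphisms of V, set H := H' + B, and let λ > 0. Assume that for every u ∈ [0, λ], ‖e^{uH'}·B·e^{−uH'}‖ ≤ 2‖B‖. Then for every ε ≥ 0 and every N > 0, ‖(id_V − E^{H'}((−N,N)))·E^H([−ε,ε])‖ ≤ 2√2·exp(−λ(N − 2ε − 6‖B‖)). -/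
/-!
Write `H = H' + B`. On the range of `E^H([-ε, ε])` both `e^{λH}` and `e^{-λH}` have norm at most
`e^{λε}`. The map `u ↦ e^{uH'} e^{-uH}` solves `f' = -(e^{uH'} B e^{-uH'}) f`, so Grönwall's
inequality and the hypothesis give `‖e^{λH'} e^{-λH}‖ ≤ e^{2λ‖B‖}`; taking adjoints turns the
hypothesis into the bound on `e^{-uH'} B e^{uH'}` needed for `‖e^{-λH'} e^{λH}‖ ≤ e^{2λ‖B‖}`.
Hence `‖e^{±λH'} y‖ ≤ e^{λ(ε + 2‖B‖)} ‖y‖` for `y = E^H([-ε, ε]) x`. In an eigenbasis of `H'`,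
a coordinate with eigenvalue `|ν| ≥ N` obeys `e^{2λN} ≤ e^{2λν} + e^{-2λν}`, so
`‖(1 - E^{H'}((-N, N))) y‖² ≤ e^{-2λN} (‖e^{λH'} y‖² + ‖e^{-λH'} y‖²)`, which gives the sharper
constant `√2 e^{-λ(N - ε - 2‖B‖)}`.
-/

open NormedSpace Set

section Exponential

variable {V : Type*} [NormedAddCommGroup V] [NormedSpace ℂ V] [CompleteSpace V]

lemma exp_apply_of_apply_eq_smul_s6 {A : V →L[ℂ] V} {μ : ℂ} {v : V} (h : A v = μ • v) :
    exp A v = Complex.exp μ • v := by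
  have hpow (n : ℕ) : (A ^ n) v = μ ^ n • v := by
    induction n with
    | zero => simp
    | succ n ih => rw [pow_succ, mul_apply_eq_comp, h, map_smul, ih, smul_smul, pow_succ']
  have hA := (ContinuousLinearMap.apply ℂ V v).map_tsum (expSeries_summable' (𝕂 := ℂ) A)
  simp only [ContinuousLinearMap.apply_apply, smul_apply, hpow, smul_smul] at hA
  rw [Complex.exp_eq_exp_ℂ, exp_eq_tsum ℂ, exp_eq_tsum ℂ, hA]
  exact (expSeries_summable' (𝕂 := ℂ) μ).tsum_smul_const v

lemma hasDerivAt_exp_ofReal_smul (A : V →L[ℂ] V) (u : ℝ) :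
    HasDerivAt (fun t : ℝ => exp ((t : ℂ) • A)) (exp ((u : ℂ) • A) * A) u := by
  simpa [Function.comp_def] using
    (hasDerivAt_exp_smul_const A (u : ℂ)).scomp u Complex.ofRealCLM.hasDerivAt

lemma hasDerivAt_exp_ofReal_smul' (A : V →L[ℂ] V) (u : ℝ) :
    HasDerivAt (fun t : ℝ => exp ((t : ℂ) • A)) (A * exp ((u : ℂ) • A)) u := by
  simpa [Function.comp_def] using
    (hasDerivAt_exp_smul_const' A (u : ℂ)).scomp u Complex.ofRealCLM.hasDerivAt

lemma exp_mul_exp_neg (A : V →L[ℂ] V) : exp A * exp (-A) = 1 := by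
  have hball (B : V →L[ℂ] V) : B ∈ Metric.eball 0 (expSeries ℂ (V →L[ℂ] V)).radius :=
    (expSeries_radius_eq_top ℂ (V →L[ℂ] V)).symm ▸ edist_lt_top _ _
  rw [← exp_add_of_commute_of_mem_ball (Commute.refl _).neg_right (hball _) (hball _),
    add_neg_cancel, exp_zero]

lemma norm_exp_smul_mul_exp_smul_le {A C : V →L[ℂ] V} {lam K : ℝ} (hlam : 0 ≤ lam)
    (hK : ∀ u ∈ Icc 0 lam, ‖exp ((u : ℂ) • A) * (A + C) * exp (-((u : ℂ) • A))‖ ≤ K) :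
    ‖exp ((lam : ℂ) • A) * exp ((lam : ℂ) • C)‖ ≤ Real.exp (K * lam) := by
  let D (u : ℝ) : V →L[ℂ] V := exp ((u : ℂ) • A) * (A + C) * exp (-((u : ℂ) • A))
  let f (u : ℝ) : V →L[ℂ] V := exp ((u : ℂ) • A) * exp ((u : ℂ) • C)
  have hf' (u : ℝ) : HasDerivAt f (D u * f u) u := by
    refine ((hasDerivAt_exp_ofReal_smul A u).mul (hasDerivAt_exp_ofReal_smul' C u)).congr_deriv ?_
    have hinv : exp (-((u : ℂ) • A)) * exp ((u : ℂ) • A) = 1 := by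
      simpa using exp_mul_exp_neg (-((u : ℂ) • A))
    calc _ = exp ((u : ℂ) • A) * (A + C) * exp ((u : ℂ) • C) := by noncomm_ring
      _ = D u * f u := by
        simp only [D, f, mul_assoc, ← mul_assoc _ (exp ((u : ℂ) • A)), hinv, one_mul]
  have hf0 : ‖f 0‖ ≤ 1 := by
    simp only [f, Complex.ofReal_zero, zero_smul, exp_zero, mul_one]
    exact ContinuousLinearMap.norm_id_le
  have hbound (u : ℝ) (hu : u ∈ Ico 0 lam) : ‖D u * f u‖ ≤ K * ‖f u‖ + 0 := by
    rw [add_zero]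
    exact (norm_mul_le _ _).trans
      (mul_le_mul_of_nonneg_right (hK u (Ico_subset_Icc_self hu)) (norm_nonneg _))
  have := norm_le_gronwallBound_of_norm_deriv_right_le
    (fun u _ => (hf' u).continuousAt.continuousWithinAt) (fun u _ => (hf' u).hasDerivWithinAt)
    hf0 hbound lam ⟨hlam, le_rfl⟩
  rwa [gronwallBound_ε0, sub_zero, one_mul] at this

lemma norm_exp_smul_apply_le_s6 {A C : V →L[ℂ] V} {lam K : ℝ} (hlam : 0 ≤ lam)
    (hK : ∀ u ∈ Icc 0 lam, ‖exp ((u : ℂ) • A) * (A + C) * exp (-((u : ℂ) • A))‖ ≤ K) (v : V) :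
    ‖exp ((lam : ℂ) • A) v‖ ≤ Real.exp (K * lam) * ‖exp (-((lam : ℂ) • C)) v‖ := by
  have hv : exp ((lam : ℂ) • A) v =
      (exp ((lam : ℂ) • A) * exp ((lam : ℂ) • C)) (exp (-((lam : ℂ) • C)) v) := by
    rw [← mul_apply_eq_comp, mul_assoc, exp_mul_exp_neg, mul_one]
  rw [hv]
  exact ((exp ((lam : ℂ) • A) * exp ((lam : ℂ) • C)).le_opNorm _).trans
    (mul_le_mul_of_nonneg_right (norm_exp_smul_mul_exp_smul_le hlam hK) (norm_nonneg _))

end Exponential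

lemma norm_exp_neg_smul_mul_mul_exp_smul {𝔸 : Type*} [NormedRing 𝔸] [NormedAlgebra ℂ 𝔸]
    [StarRing 𝔸] [StarModule ℂ 𝔸] [NormedStarGroup 𝔸] {T B : 𝔸} (hT : IsSelfAdjoint T)
    (hB : IsSelfAdjoint B) (u : ℝ) :
    ‖exp (-((u : ℂ) • T)) * B * exp ((u : ℂ) • T)‖ =
      ‖exp ((u : ℂ) • T) * B * exp (-((u : ℂ) • T))‖ := by
  have huT : IsSelfAdjoint ((u : ℂ) • T) := IsSelfAdjoint.smul (Complex.conj_ofReal u) hT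
  rw [← norm_star (exp ((u : ℂ) • T) * B * exp (-((u : ℂ) • T))), star_mul, star_mul,
    huT.exp.star_eq, huT.neg.exp.star_eq, hB.star_eq, mul_assoc]

section Conjugation

variable {V : Type*} [NormedAddCommGroup V] [InnerProductSpace ℂ V] [CompleteSpace V]
  {H' B : V →L[ℂ] V} {lam K : ℝ}

lemma norm_exp_smul_apply_le_of_conj_le (hlam : 0 ≤ lam)
    (hK : ∀ u ∈ Icc 0 lam, ‖exp ((u : ℂ) • H') * B * exp (-((u : ℂ) • H'))‖ ≤ K) (v : V) :
    ‖exp ((lam : ℂ) • H') v‖ ≤ Real.exp (K * lam) * ‖exp ((lam : ℂ) • (H' + B)) v‖ := by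
  have hK' (u : ℝ) (hu : u ∈ Icc 0 lam) :
      ‖exp ((u : ℂ) • H') * (H' + -(H' + B)) * exp (-((u : ℂ) • H'))‖ ≤ K := by
    rw [show H' + -(H' + B) = -B by abel, mul_neg, neg_mul, norm_neg]
    exact hK u hu
  simpa only [smul_neg, neg_neg] using norm_exp_smul_apply_le_s6 hlam hK' v

lemma norm_exp_neg_smul_apply_le_of_conj_le (hH' : IsSelfAdjoint H') (hB : IsSelfAdjoint B)
    (hlam : 0 ≤ lam)
    (hK : ∀ u ∈ Icc 0 lam, ‖exp ((u : ℂ) • H') * B * exp (-((u : ℂ) • H'))‖ ≤ K) (v : V) :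
    ‖exp (-((lam : ℂ) • H')) v‖ ≤ Real.exp (K * lam) * ‖exp (-((lam : ℂ) • (H' + B))) v‖ := by
  have hK' (u : ℝ) (hu : u ∈ Icc 0 lam) :
      ‖exp ((u : ℂ) • -H') * (-H' + (H' + B)) * exp (-((u : ℂ) • -H'))‖ ≤ K := by
    rw [neg_add_cancel_left, smul_neg, neg_neg,
      norm_exp_neg_smul_mul_mul_exp_smul (𝔸 := V →L[ℂ] V) hH' hB]
    exact hK u hu
  simpa only [smul_neg] using norm_exp_smul_apply_le_s6 hlam hK' v

end Conjugation

lemma one_le_exp_mul_exp_sq_add_exp_sq {t N ν : ℝ} (ht : 0 ≤ t) (hν : ν ∉ Ioo (-N) N) :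
    1 ≤ Real.exp (-(2 * t * N)) * (Real.exp (t * ν) ^ 2 + Real.exp (-t * ν) ^ 2) := by
  simp only [sq, mul_add, ← Real.exp_add]
  rw [mem_Ioo, not_and_or, not_lt, not_lt] at hν
  rcases hν with hν | hν
  · exact (Real.one_le_exp (by nlinarith)).trans (le_add_of_nonneg_left (Real.exp_pos _).le)
  · exact (Real.one_le_exp (by nlinarith)).trans (le_add_of_nonneg_right (Real.exp_pos _).le)

section Spectral

variable {V : Type*} [NormedAddCommGroup V] [InnerProductSpace ℂ V] {T : V →L[ℂ] V}

def spectralSubspace (T : V →L[ℂ] V) (I : Set ℝ) : Submodule ℂ V :=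
  ⨆ μ ∈ I, Module.End.eigenspace (T : V →ₗ[ℂ] V) (μ : ℂ)

lemma inner_eq_zero_of_mem_eigenspace_of_mem_spectralSubspace
    (hT : (T : V →ₗ[ℂ] V).IsSymmetric) {I : Set ℝ} {ν : ℝ} (hν : ν ∉ I) {v w : V}
    (hv : v ∈ Module.End.eigenspace (T : V →ₗ[ℂ] V) (ν : ℂ)) (hw : w ∈ spectralSubspace T I) :
    inner ℂ v w = 0 := by
  suffices spectralSubspace T I ≤ (ℂ ∙ v)ᗮ from
    Submodule.mem_orthogonal_singleton_iff_inner_right.mp (this hw)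
  refine iSup₂_le fun μ hμ y hy => Submodule.mem_orthogonal_singleton_iff_inner_right.mpr ?_
  have hνμ : (ν : ℂ) ≠ μ := by exact_mod_cast ne_of_mem_of_not_mem hμ hν |>.symm
  exact hT.orthogonalFamily_eigenspaces hνμ ⟨v, hv⟩ ⟨y, hy⟩

variable [FiniteDimensional ℂ V]

lemma specProj_eq_starProjection_s6 (T : V →L[ℂ] V) (I : Set ℝ) :
    specProj T I = (spectralSubspace T I).starProjection :=
  rfl

section Eigenbasis

variable (hT : IsSelfAdjoint T) {n : ℕ} (hn : Module.finrank ℂ V = n)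

local notation "b" => hT.isSymmetric.eigenvectorBasis hn
local notation "ν" => hT.isSymmetric.eigenvalues hn

lemma inner_eigenvectorBasis_exp_smul (t : ℝ) (w : V) (i : Fin n) :
    inner ℂ (b i) (exp ((t : ℂ) • T) w) = Real.exp (t * ν i) * inner ℂ (b i) w := by
  have hexp : IsSelfAdjoint (exp ((t : ℂ) • T)) :=
    (IsSelfAdjoint.smul (Complex.conj_ofReal t) hT).exp
  have heigen : exp ((t : ℂ) • T) (b i) = (Real.exp (t * ν i) : ℂ) • b i := by
    rw [Complex.ofReal_exp]
    refine exp_apply_of_apply_eq_smul_s6 ?_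
    have h := hT.isSymmetric.apply_eigenvectorBasis hn i
    rw [ContinuousLinearMap.coe_coe] at h
    rw [smul_apply, h, smul_smul, Complex.ofReal_mul]
    rfl
  have hsymm := hexp.isSymmetric (b i) w
  simp only [ContinuousLinearMap.coe_coe] at hsymm
  rw [← hsymm, heigen, inner_smul_left, Complex.conj_ofReal]

lemma eigenvectorBasis_mem_spectralSubspace {I : Set ℝ} {i : Fin n} (hi : ν i ∈ I) :
    b i ∈ spectralSubspace T I :=
  Submodule.mem_iSup_of_mem (ν i) <| Submodule.mem_iSup_of_mem hi <|
    Module.End.mem_eigenspace_iff.mpr (hT.isSymmetric.apply_eigenvectorBasis hn i)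

lemma inner_eigenvectorBasis_eq_zero_of_mem_spectralSubspace {I : Set ℝ} {i : Fin n}
    (hi : ν i ∉ I) {y : V} (hy : y ∈ spectralSubspace T I) : inner ℂ (b i) y = 0 :=
  inner_eq_zero_of_mem_eigenspace_of_mem_spectralSubspace hT.isSymmetric hi
    (Module.End.mem_eigenspace_iff.mpr (hT.isSymmetric.apply_eigenvectorBasis hn i)) hy

lemma inner_eigenvectorBasis_eq_zero_of_mem_orthogonal {I : Set ℝ} {i : Fin n}
    (hi : ν i ∈ I) {z : V} (hz : z ∈ (spectralSubspace T I)ᗮ) : inner ℂ (b i) z = 0 :=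
  (Submodule.mem_orthogonal _ z).mp hz _ (eigenvectorBasis_mem_spectralSubspace hT hn hi)

lemma norm_inner_eigenvectorBasis_sub_specProj_sq_le {t : ℝ} (ht : 0 ≤ t) (N : ℝ) (y : V)
    (i : Fin n) :
    ‖inner ℂ (b i) (y - specProj T (Ioo (-N) N) y)‖ ^ 2 ≤ Real.exp (-(2 * t * N)) *
      (‖inner ℂ (b i) (exp ((t : ℂ) • T) y)‖ ^ 2 +
        ‖inner ℂ (b i) (exp (-((t : ℂ) • T)) y)‖ ^ 2) := by
  rw [specProj_eq_starProjection_s6]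
  by_cases hi : ν i ∈ Ioo (-N) N
  · rw [inner_eigenvectorBasis_eq_zero_of_mem_orthogonal hT hn hi
      (Submodule.sub_starProjection_mem_orthogonal y)]
    rw [norm_zero, zero_pow two_ne_zero]
    positivity
  · rw [inner_sub_right, inner_eigenvectorBasis_eq_zero_of_mem_spectralSubspace hT hn hi
      (Submodule.starProjection_apply_mem _ y), sub_zero, ← neg_smul, ← Complex.ofReal_neg,
      inner_eigenvectorBasis_exp_smul hT hn, inner_eigenvectorBasis_exp_smul hT hn]
    simp only [norm_mul, Complex.norm_real, Real.norm_of_nonneg (Real.exp_pos _).le, mul_pow]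
    calc _ = 1 * ‖inner ℂ (b i) y‖ ^ 2 := (one_mul _).symm
      _ ≤ Real.exp (-(2 * t * N)) * (Real.exp (t * ν i) ^ 2 + Real.exp (-t * ν i) ^ 2) *
          ‖inner ℂ (b i) y‖ ^ 2 := by
        gcongr
        exact one_le_exp_mul_exp_sq_add_exp_sq ht hi
      _ = _ := by ring

end Eigenbasis

lemma norm_exp_smul_apply_le_of_mem_spectralSubspace (hT : IsSelfAdjoint T) {I : Set ℝ}
    {t c : ℝ} (hc : ∀ μ ∈ I, t * μ ≤ c) {y : V} (hy : y ∈ spectralSubspace T I) :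
    ‖exp ((t : ℂ) • T) y‖ ≤ Real.exp c * ‖y‖ := by
  let b := hT.isSymmetric.eigenvectorBasis rfl
  rw [← sq_le_sq₀ (norm_nonneg _) (by positivity), mul_pow, ← b.sum_sq_norm_inner_right,
    ← b.sum_sq_norm_inner_right, Finset.mul_sum]
  refine Finset.sum_le_sum fun i _ => ?_
  rw [inner_eigenvectorBasis_exp_smul hT rfl, norm_mul, mul_pow, Complex.norm_real,
    Real.norm_of_nonneg (Real.exp_pos _).le]
  by_cases hi : hT.isSymmetric.eigenvalues rfl i ∈ I
  · gcongr
    exact hc _ hi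
  · rw [inner_eigenvectorBasis_eq_zero_of_mem_spectralSubspace hT rfl hi hy]
    simp

lemma norm_sub_specProj_Ioo_sq_le (hT : IsSelfAdjoint T) {t : ℝ} (ht : 0 ≤ t) (N : ℝ) (y : V) :
    ‖y - specProj T (Ioo (-N) N) y‖ ^ 2 ≤
      Real.exp (-(2 * t * N)) * (‖exp ((t : ℂ) • T) y‖ ^ 2 + ‖exp (-((t : ℂ) • T)) y‖ ^ 2) := by
  let b := hT.isSymmetric.eigenvectorBasis rfl
  rw [← b.sum_sq_norm_inner_right, ← b.sum_sq_norm_inner_right, ← b.sum_sq_norm_inner_right,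
    ← Finset.sum_add_distrib, Finset.mul_sum]
  exact Finset.sum_le_sum fun i _ => norm_inner_eigenvectorBasis_sub_specProj_sq_le hT rfl ht N y i

end Spectral

theorem norm_one_sub_specProj_mul_specProj_le {V : Type*} [NormedAddCommGroup V]
    [InnerProductSpace ℂ V] [FiniteDimensional ℂ V] {H' B : V →L[ℂ] V} (hH' : IsSelfAdjoint H')
    (hB : IsSelfAdjoint B) {lam : ℝ} (hlam : 0 ≤ lam)
    (hHad : ∀ u ∈ Icc 0 lam, ‖exp ((u : ℂ) • H') * B * exp (-((u : ℂ) • H'))‖ ≤ 2 * ‖B‖)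
    (ε N : ℝ) :
    ‖(1 - specProj H' (Ioo (-N) N)) * specProj (H' + B) (Icc (-ε) ε)‖ ≤
      √2 * Real.exp (-lam * (N - ε - 2 * ‖B‖)) := by
  refine ContinuousLinearMap.opNorm_le_bound _ (by positivity) fun x => ?_
  set y := specProj (H' + B) (Icc (-ε) ε) x
  have hy : y ∈ spectralSubspace (H' + B) (Icc (-ε) ε) := Submodule.starProjection_apply_mem _ x
  have hyx : ‖y‖ ≤ ‖x‖ := Submodule.norm_starProjection_apply_le _ x
  have hspec (t : ℝ) (ht : |t| ≤ lam) :
      ‖exp ((t : ℂ) • (H' + B)) y‖ ≤ Real.exp (lam * ε) * ‖x‖ := by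
    refine (norm_exp_smul_apply_le_of_mem_spectralSubspace (hH'.add hB) (fun μ hμ => ?_) hy).trans
      (by gcongr)
    exact (le_abs_self _).trans
      (abs_mul t μ ▸ mul_le_mul ht (abs_le.mpr hμ) (abs_nonneg _) hlam)
  have hplus : ‖exp ((lam : ℂ) • H') y‖ ≤
      Real.exp (2 * ‖B‖ * lam) * (Real.exp (lam * ε) * ‖x‖) :=
    (norm_exp_smul_apply_le_of_conj_le hlam hHad y).trans
      (by gcongr; exact hspec lam (abs_of_nonneg hlam).le)
  have hminus : ‖exp (-((lam : ℂ) • H')) y‖ ≤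
      Real.exp (2 * ‖B‖ * lam) * (Real.exp (lam * ε) * ‖x‖) := by
    have hs := hspec (-lam) (by rw [abs_neg, abs_of_nonneg hlam])
    rw [Complex.ofReal_neg, neg_smul] at hs
    exact (norm_exp_neg_smul_apply_le_of_conj_le hH' hB hlam hHad y).trans (by gcongr)
  rw [mul_apply_eq_comp, sub_apply, one_apply_eq_self, ← sq_le_sq₀ (norm_nonneg _) (by positivity)]
  calc _ ≤ _ := norm_sub_specProj_Ioo_sq_le hH' hlam N y
    _ ≤ Real.exp (-(2 * lam * N)) * ((Real.exp (2 * ‖B‖ * lam) * (Real.exp (lam * ε) * ‖x‖)) ^ 2 +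
          (Real.exp (2 * ‖B‖ * lam) * (Real.exp (lam * ε) * ‖x‖)) ^ 2) := by gcongr
    _ = _ := by
      simp only [mul_pow, Real.sq_sqrt two_pos.le, ← Real.exp_nat_mul]
      rw [show ((2 : ℕ) : ℝ) * (-lam * (N - ε - 2 * ‖B‖)) =
          -(2 * lam * N) + (2 : ℕ) * (2 * ‖B‖ * lam) + (2 : ℕ) * (lam * ε) by push_cast; ring,
        Real.exp_add, Real.exp_add]
      ring

/-- Finite-volume overlap estimate (AKL Thm 2.2 form): with `H = H' + B` and the
real Hadamard bound for `e^{uH'} B e^{−uH'}` on `[0,λ]`, for `ε ≥ 0`, `N > 0`,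
`‖(I − E^{H'}((−N,N)))·E^H([−ε,ε])‖ ≤ 2√2·e^{−λ(N−2ε−6‖B‖)}`. -/
theorem stmt_6 {V : Type*} [NormedAddCommGroup V] [InnerProductSpace ℂ V]
    [FiniteDimensional ℂ V]
    (H' B : V →L[ℂ] V) (hH' : IsSelfAdjoint H') (hB : IsSelfAdjoint B)
    (lam : ℝ) (hlam : 0 < lam)
    (hHad : ∀ u ∈ Set.Icc (0 : ℝ) lam,
      ‖NormedSpace.exp ((u : ℂ) • H') * B *
          NormedSpace.exp (-((u : ℂ) • H'))‖ ≤ 2 * ‖B‖) :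
    ∀ (ε N : ℝ), 0 ≤ ε → 0 < N →
      ‖((1 : V →L[ℂ] V) - specProj H' (Set.Ioo (-N) N)) *
          specProj (H' + B) (Set.Icc (-ε) ε)‖ ≤
        2 * Real.sqrt 2 * Real.exp (-lam * (N - 2 * ε - 6 * ‖B‖)) := by
  intro ε N hε _
  refine (norm_one_sub_specProj_mul_specProj_le hH' hB hlam.le hHad ε N).trans ?_
  have hexp : Real.exp (-lam * (N - ε - 2 * ‖B‖)) ≤ Real.exp (-lam * (N - 2 * ε - 6 * ‖B‖)) :=
    Real.exp_le_exp.mpr (by nlinarith [norm_nonneg B])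
  have := Real.sqrt_nonneg 2
  nlinarith [Real.exp_pos (-lam * (N - ε - 2 * ‖B‖))]
end

section
/- Let V be a finite-dimensional complex inner product space, let H' and B be self-adjoint linear endomorphisms of V, let M ∈ ℝ be such that every eigenvalue of H' is strictly greater than −M, and let S > 0. Define H̄' := H'·E^{H'}((−M,M)) + M·E^{H'}([M,∞)) and H̄ := H̄' + B. Assume that for every s ∈ ℂ with |s| < S, ‖e^{sH'}·B·e^{−sH'}‖ ≤ ‖B‖/(1 − |s|/S). Then for every s ∈ ℂ with |s| < S and every linear endomorphism A of V, ‖e^{sH̄}·e^{−sH̄'}·A·e^{sH̄'}·e^{−sH̄}‖ ≤ exp( 2|s|·( 2‖B‖ + ‖B‖/(1 − |s|/S) ) )·‖A‖. -/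
/-- The energy-truncated operator `T̄ := T·E^T((−M,M)) + M·E^T([M,∞))`. -/
noncomputable def etrunc {V : Type*} [NormedAddCommGroup V] [InnerProductSpace ℂ V]
    [FiniteDimensional ℂ V] (T : V →L[ℂ] V) (M : ℝ) : V →L[ℂ] V :=
  T * specProj T (Set.Ioo (-M) M) + (M : ℂ) • specProj T (Set.Ici M)

open NormedSpace ComplexConjugate

lemma norm_mul_mul_le_of_norm_le_one {R : Type*} [NormedRing R] {x z : R} (hx : ‖x‖ ≤ 1)
    (hz : ‖z‖ ≤ 1) (y : R) : ‖x * y * z‖ ≤ ‖y‖ :=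
  calc ‖x * y * z‖ ≤ ‖x‖ * ‖y‖ * ‖z‖ := norm_mul₃_le
    _ ≤ 1 * ‖y‖ * 1 := by gcongr
    _ = ‖y‖ := by ring

lemma norm_cexp_mul_ofReal_le_one {w : ℂ} (hw : 0 ≤ w.re) {x : ℝ} (hx : x ≤ 0) :
    ‖Complex.exp (w * x)‖ ≤ 1 := by
  rw [Complex.norm_exp, Real.exp_le_one_iff, Complex.re_mul_ofReal]
  exact mul_nonpos_of_nonneg_of_nonpos hw hx

lemma star_exp_smul_mul_mul_exp_neg_smul {A : Type*} [NormedRing A] [NormedAlgebra ℂ A]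
    [StarRing A] [StarModule ℂ A] [ContinuousStar A] {T : A}
    (hT : IsSelfAdjoint T) (w : ℂ) (B : A) :
    star (exp (w • T) * B * exp (-(w • T))) =
      exp ((-conj w) • T) * star B * exp (-((-conj w) • T)) := by
  simp only [star_mul, star_exp, star_neg, star_smul, hT.star_eq, neg_smul, neg_neg, mul_assoc]
  rfl

section Diagonal

variable {ι : Type*} [Fintype ι] [DecidableEq ι]
variable {E : Type*} [NormedAddCommGroup E] [InnerProductSpace ℂ E] [CompleteSpace E]

noncomputable def Matrix.diagonalStarAlgHom : (ι → ℂ) →⋆ₐ[ℂ] Matrix ι ι ℂ :=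
  { Matrix.diagonalAlgHom ℂ with map_star' := fun v => (Matrix.diagonal_conjTranspose v).symm }

@[simp]
lemma Matrix.diagonalStarAlgHom_apply (d : ι → ℂ) :
    Matrix.diagonalStarAlgHom d = Matrix.diagonal d :=
  rfl

noncomputable def OrthonormalBasis.diagonal (b : OrthonormalBasis ι ℂ E) :
    (ι → ℂ) →⋆ₐ[ℂ] (E →L[ℂ] E) :=
  (b.repr.symm.conjStarAlgEquiv.toStarAlgHom.comp Matrix.toEuclideanCLM.toStarAlgHom).comp
    Matrix.diagonalStarAlgHom

namespace OrthonormalBasis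

variable (b : OrthonormalBasis ι ℂ E)

lemma diagonal_apply_self (d : ι → ℂ) (j : ι) : b.diagonal d (b j) = d j • b j := by
  apply b.repr.injective
  ext i
  simp [OrthonormalBasis.diagonal, Pi.single_apply]

lemma eq_diagonal_of_apply {T : E →L[ℂ] E} {d : ι → ℂ} (hT : ∀ i, T (b i) = d i • b i) :
    T = b.diagonal d :=
  ContinuousLinearMap.coe_injective <| b.toBasis.ext fun i => by
    simpa [b.diagonal_apply_self] using hT i

lemma norm_diagonal_le_one {d : ι → ℂ} (hd : ∀ i, ‖d i‖ ≤ 1) : ‖b.diagonal d‖ ≤ 1 :=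
  (NonUnitalStarAlgHom.norm_apply_le _ d).trans ((pi_norm_le_iff_of_nonneg zero_le_one).mpr hd)

lemma exp_smul_diagonal (w : ℂ) (d : ι → ℂ) :
    exp (w • b.diagonal d) = b.diagonal fun i => Complex.exp (w * d i) := by
  let +nondep : NormedAlgebra ℚ (E →L[ℂ] E) := .restrictScalars ℚ ℂ _
  have hcont : Continuous (b.diagonal : (ι → ℂ) → E →L[ℂ] E) :=
    (b.diagonal.toLinearMap).continuous_of_finiteDimensional
  rw [← map_smul, ← map_exp _ hcont, Pi.exp_def, Complex.exp_eq_exp_ℂ]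
  rfl

lemma isSelfAdjoint_diagonal_ofReal (d : ι → ℝ) :
    IsSelfAdjoint (b.diagonal fun i => (d i : ℂ)) :=
  IsSelfAdjoint.map (funext fun i => Complex.conj_ofReal (d i)) _

end OrthonormalBasis

end Diagonal

section Spectral

variable {V : Type*} [NormedAddCommGroup V] [InnerProductSpace ℂ V] [FiniteDimensional ℂ V]
variable {T : V →L[ℂ] V} (hT : (T : V →ₗ[ℂ] V).IsSymmetric) {M : ℝ}
include hT

open Module.End in
lemma specProj_apply_of_mem_eigenspace (I : Set ℝ) [DecidablePred (· ∈ I)] {r : ℝ} {v : V}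
    (hv : v ∈ eigenspace (T : V →ₗ[ℂ] V) r) :
    specProj T I v = if r ∈ I then v else 0 := by
  change Submodule.starProjection _ v = _
  split_ifs with hr
  · exact Submodule.starProjection_eq_self_iff.mpr
      (Submodule.mem_iSup_of_mem r (Submodule.mem_iSup_of_mem hr hv))
  · refine (Submodule.starProjection_apply_eq_zero_iff _).mpr (Submodule.IsOrtho.le ?_ hv)
    simp only [Submodule.isOrtho_iSup_right]
    intro a ha
    exact hT.orthogonalFamily_eigenspaces.isOrtho fun h => hr (Complex.ofReal_injective h ▸ ha)

open Module.End in
lemma etrunc_apply_of_mem_eigenspace {r : ℝ} (hr : -M < r) {v : V}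
    (hv : v ∈ eigenspace (T : V →ₗ[ℂ] V) r) : etrunc T M v = ((min r M : ℝ) : ℂ) • v := by
  classical
  have hTv : T v = (r : ℂ) • v := mem_eigenspace_iff.mp hv
  simp only [etrunc, add_apply, mul_apply_eq_comp, smul_apply,
    specProj_apply_of_mem_eigenspace hT _ hv, Set.mem_Ioo, Set.mem_Ici]
  rcases lt_or_ge r M with h | h
  · simp [h, hr, hTv, not_le.mpr h, min_eq_left h.le]
  · simp [h, not_lt.mpr h]

lemma etrunc_eq_diagonal (hM : ∀ r : ℝ, Module.End.HasEigenvalue (T : V →ₗ[ℂ] V) r → -M < r) :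
    etrunc T M =
      (hT.eigenvectorBasis rfl).diagonal fun i => ((min (hT.eigenvalues rfl i) M : ℝ) : ℂ) :=
  OrthonormalBasis.eq_diagonal_of_apply _ fun i =>
    etrunc_apply_of_mem_eigenspace hT (hM _ (hT.hasEigenvalue_eigenvalues rfl i))
      (hT.hasEigenvector_eigenvectorBasis rfl i).1

lemma eq_diagonal_eigenvalues :
    T = (hT.eigenvectorBasis rfl).diagonal fun i => (hT.eigenvalues rfl i : ℂ) :=
  OrthonormalBasis.eq_diagonal_of_apply _ (hT.apply_eigenvectorBasis rfl)

end Spectral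

section Conjugation

variable {ι : Type*} [Fintype ι] [DecidableEq ι]
variable {E : Type*} [NormedAddCommGroup E] [InnerProductSpace ℂ E] [CompleteSpace E]
variable (b : OrthonormalBasis ι ℂ E) (μ : ι → ℝ) (M : ℝ)

theorem diagonal_conj_min_eq (w : ℂ) (B : E →L[ℂ] E) :
    b.diagonal (fun i => Complex.exp (w * ((min (μ i) M : ℝ) : ℂ))) * B *
        b.diagonal (fun i => Complex.exp (-w * ((min (μ i) M : ℝ) : ℂ))) =
      b.diagonal (fun i => Complex.exp (w * ((min (μ i) M - μ i : ℝ) : ℂ))) *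
          (b.diagonal (fun i => Complex.exp (w * μ i)) * B *
            b.diagonal (fun i => Complex.exp (-w * μ i))) *
          b.diagonal (fun i => if μ i < M then 1 else 0) +
        b.diagonal (fun i => Complex.exp (w * ((min (μ i) M - M : ℝ) : ℂ))) * B *
          b.diagonal (fun i => if μ i < M then 0 else 1) := by
  have hA : b.diagonal (fun i => Complex.exp (w * ((min (μ i) M - μ i : ℝ) : ℂ))) *
      b.diagonal (fun i => Complex.exp (w * μ i)) =
        b.diagonal (fun i => Complex.exp (w * ((min (μ i) M : ℝ) : ℂ))) := by
    rw [← map_mul]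
    congr 1; funext i
    simp only [Pi.mul_apply, ← Complex.exp_add]
    congr 1; push_cast; ring
  have hB : b.diagonal (fun i => Complex.exp (-w * ((min (μ i) M : ℝ) : ℂ))) =
      b.diagonal (fun i => Complex.exp (-w * μ i)) *
          b.diagonal (fun i => if μ i < M then 1 else 0) +
        Complex.exp (-w * M) • b.diagonal (fun i => if μ i < M then 0 else 1) := by
    rw [← map_mul, ← map_smul, ← map_add]
    congr 1; funext i
    by_cases h : μ i < M
    · simp [h, min_eq_left h.le]
    · simp [h, min_eq_right (not_lt.mp h)]
  have hC : b.diagonal (fun i => Complex.exp (w * ((min (μ i) M - M : ℝ) : ℂ))) =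
      Complex.exp (-w * M) • b.diagonal (fun i => Complex.exp (w * ((min (μ i) M : ℝ) : ℂ))) := by
    rw [← map_smul]
    congr 1; funext i
    simp only [Pi.smul_apply, smul_eq_mul, ← Complex.exp_add]
    congr 1; push_cast; ring
  rw [hB, hC, ← hA]
  simp only [mul_add, smul_mul_assoc, mul_smul_comm, mul_assoc]

theorem norm_conj_exp_diagonal_min_le_of_re_nonneg {w : ℂ} (hw : 0 ≤ w.re) (B : E →L[ℂ] E) :
    ‖exp (w • b.diagonal (fun i => ((min (μ i) M : ℝ) : ℂ))) * B *
        exp (-(w • b.diagonal (fun i => ((min (μ i) M : ℝ) : ℂ))))‖ ≤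
      ‖B‖ + ‖exp (w • b.diagonal (fun i => (μ i : ℂ))) * B *
        exp (-(w • b.diagonal (fun i => (μ i : ℂ))))‖ := by
  simp only [← neg_smul, b.exp_smul_diagonal]
  rw [diagonal_conj_min_eq, add_comm ‖B‖]
  refine (norm_add_le _ _).trans (add_le_add ?_ ?_)
  · refine norm_mul_mul_le_of_norm_le_one (b.norm_diagonal_le_one fun i => ?_)
      (b.norm_diagonal_le_one fun i => ?_) _
    · exact norm_cexp_mul_ofReal_le_one hw (sub_nonpos.mpr (min_le_left _ _))
    · split_ifs <;> simp
  · refine norm_mul_mul_le_of_norm_le_one (b.norm_diagonal_le_one fun i => ?_)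
      (b.norm_diagonal_le_one fun i => ?_) B
    · exact norm_cexp_mul_ofReal_le_one hw (sub_nonpos.mpr (min_le_right _ _))
    · split_ifs <;> simp

theorem norm_conj_exp_diagonal_min_le (w : ℂ) (B : E →L[ℂ] E) :
    ‖exp (w • b.diagonal (fun i => ((min (μ i) M : ℝ) : ℂ))) * B *
        exp (-(w • b.diagonal (fun i => ((min (μ i) M : ℝ) : ℂ))))‖ ≤
      ‖B‖ + ‖exp (w • b.diagonal (fun i => (μ i : ℂ))) * B *
        exp (-(w • b.diagonal (fun i => (μ i : ℂ))))‖ := by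
  rcases le_total 0 w.re with hw | hw
  · exact norm_conj_exp_diagonal_min_le_of_re_nonneg b μ M hw B
  · -- taking adjoints replaces `w` by `-conj w`, which has nonnegative real part
    have h := norm_conj_exp_diagonal_min_le_of_re_nonneg b μ M (w := -conj w) (by simpa using hw)
      (star B)
    rwa [← star_exp_smul_mul_mul_exp_neg_smul (T := b.diagonal fun i => ((min (μ i) M : ℝ) : ℂ))
      (b.isSelfAdjoint_diagonal_ofReal _), ← star_exp_smul_mul_mul_exp_neg_smul
      (T := b.diagonal fun i => (μ i : ℂ)) (b.isSelfAdjoint_diagonal_ofReal _), norm_star,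
      norm_star, norm_star] at h

end Conjugation

section Truncation

variable {V : Type*} [NormedAddCommGroup V] [InnerProductSpace ℂ V] [FiniteDimensional ℂ V]
variable {T : V →L[ℂ] V} (hT : IsSelfAdjoint T) {M : ℝ}
  (hM : ∀ r : ℝ, Module.End.HasEigenvalue (T : V →ₗ[ℂ] V) r → -M < r)
include hT hM

theorem norm_conj_exp_etrunc_le (w : ℂ) (B : V →L[ℂ] V) :
    ‖exp (w • etrunc T M) * B * exp (-(w • etrunc T M))‖ ≤
      ‖B‖ + ‖exp (w • T) * B * exp (-(w • T))‖ := by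
  have h := norm_conj_exp_diagonal_min_le (hT.isSymmetric.eigenvectorBasis rfl)
    (hT.isSymmetric.eigenvalues rfl) M w B
  rwa [← etrunc_eq_diagonal hT.isSymmetric hM, ← eq_diagonal_eigenvalues hT.isSymmetric] at h

theorem norm_conj_exp_etrunc_le_of_norm_le {B : V →L[ℂ] V} {S : ℝ}
    (hB : ∀ w : ℂ, ‖w‖ < S → ‖exp (w • T) * B * exp (-(w • T))‖ ≤ ‖B‖ / (1 - ‖w‖ / S))
    {r : ℝ} (hr : r < S) {w : ℂ} (hw : ‖w‖ ≤ r) :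
    ‖exp (w • etrunc T M) * B * exp (-(w • etrunc T M))‖ ≤ ‖B‖ + ‖B‖ / (1 - r / S) := by
  have hS : 0 < S := (norm_nonneg w).trans_lt (hw.trans_lt hr)
  have hrS : 0 < 1 - r / S := by rwa [sub_pos, div_lt_one hS]
  calc _ ≤ ‖B‖ + ‖exp (w • T) * B * exp (-(w • T))‖ := norm_conj_exp_etrunc_le hT hM w B
    _ ≤ ‖B‖ + ‖B‖ / (1 - ‖w‖ / S) := by gcongr; exact hB w (hw.trans_lt hr)
    _ ≤ ‖B‖ + ‖B‖ / (1 - r / S) := by gcongr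

end Truncation

section Gronwall

variable {𝔸 : Type*} [NormedRing 𝔸] [NormedAlgebra ℝ 𝔸] [CompleteSpace 𝔸]

theorem norm_exp_add_mul_exp_neg_le (K B : 𝔸) {c : ℝ}
    (hc : ∀ t ∈ Set.Icc (0 : ℝ) 1, ‖exp (t • K) * B * exp (-(t • K))‖ ≤ c) :
    ‖exp (K + B) * exp (-K)‖ ≤ ‖(1 : 𝔸)‖ * Real.exp c := by
  let +nondep : NormedAlgebra ℚ 𝔸 := .restrictScalars ℚ ℝ 𝔸
  set F : ℝ → 𝔸 := fun t => exp (t • (K + B)) * exp (t • -K)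
  have hF : ∀ t, HasDerivAt F (F t * (exp (t • K) * B * exp (-(t • K)))) t := by
    intro t
    refine ((hasDerivAt_exp_smul_const (K + B) t).mul
      (hasDerivAt_exp_smul_const' (-K) t)).congr_deriv ?_
    have hinv : exp (-(t • K)) * exp (t • K) = 1 := by
      rw [← exp_add_of_commute ((Commute.refl _).neg_left), neg_add_cancel, exp_zero]
    simp only [F, smul_neg]
    calc _ = exp (t • (K + B)) * B * exp (-(t • K)) := by
          simp only [mul_add, add_mul, mul_neg, neg_mul, mul_assoc]; abel
      _ = exp (t • (K + B)) * (exp (-(t • K)) * exp (t • K)) * B * exp (-(t • K)) := by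
          rw [hinv, mul_one]
      _ = _ := by simp only [mul_assoc]
  have hbound : ∀ t ∈ Set.Ico (0 : ℝ) 1, ‖F t * (exp (t • K) * B * exp (-(t • K)))‖ ≤
      c * ‖F t‖ + 0 := fun t ht => by
    rw [add_zero, mul_comm c]
    exact (norm_mul_le _ _).trans
      (mul_le_mul_of_nonneg_left (hc t (Set.Ico_subset_Icc_self ht)) (norm_nonneg _))
  have := norm_le_gronwallBound_of_norm_deriv_right_le (δ := ‖(1 : 𝔸)‖)
    (fun t _ => (hF t).continuousAt.continuousWithinAt) (fun t _ => (hF t).hasDerivWithinAt)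
    (by simp [F]) hbound 1 (Set.right_mem_Icc.mpr zero_le_one)
  simpa [F, gronwallBound_ε0] using this

theorem norm_exp_mul_exp_neg_add_le (K B : 𝔸) {c : ℝ}
    (hc : ∀ t ∈ Set.Icc (0 : ℝ) 1, ‖exp (t • K) * B * exp (-(t • K))‖ ≤ c) :
    ‖exp K * exp (-(K + B))‖ ≤ ‖(1 : 𝔸)‖ * Real.exp c := by
  -- in `𝔸ᵐᵒᵖ` the two factors trade places and the roles of `K + B` and `K` are exchanged
  have := norm_exp_add_mul_exp_neg_le (MulOpposite.op (-K)) (MulOpposite.op (-B)) (c := c)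
    fun t ht => by
      simpa only [← MulOpposite.op_smul, ← MulOpposite.op_neg, exp_op, ← MulOpposite.op_mul,
        MulOpposite.norm_op, smul_neg, neg_neg, mul_neg, neg_mul, norm_neg, mul_assoc] using hc t ht
  simp only [← MulOpposite.op_add, ← MulOpposite.op_neg, exp_op, ← MulOpposite.op_mul,
    MulOpposite.norm_op, neg_neg] at this
  rwa [neg_add]

end Gronwall

theorem stmt_8_general {V : Type*} [NormedAddCommGroup V] [InnerProductSpace ℂ V]
    [FiniteDimensional ℂ V]
    (H' B : V →L[ℂ] V) (hH' : IsSelfAdjoint H')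
    (M : ℝ) (hM : ∀ μ : ℝ, Module.End.HasEigenvalue (↑H' : V →ₗ[ℂ] V) (μ : ℂ) → -M < μ)
    (S : ℝ)
    (hHad : ∀ s : ℂ, ‖s‖ < S →
      ‖NormedSpace.exp (s • H') * B * NormedSpace.exp (-(s • H'))‖ ≤
        ‖B‖ / (1 - ‖s‖ / S)) :
    ∀ (s : ℂ), ‖s‖ < S → ∀ (A : V →L[ℂ] V),
      ‖NormedSpace.exp (s • (etrunc H' M + B)) * NormedSpace.exp (-(s • etrunc H' M)) *
          A *
          NormedSpace.exp (s • etrunc H' M) * NormedSpace.exp (-(s • (etrunc H' M + B)))‖ ≤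
        Real.exp (2 * ‖s‖ * (2 * ‖B‖ + ‖B‖ / (1 - ‖s‖ / S))) * ‖A‖ := by
  intro s hs A
  set K := etrunc H' M
  set D := 2 * ‖B‖ + ‖B‖ / (1 - ‖s‖ / S)
  have hconj : ∀ t ∈ Set.Icc (0 : ℝ) 1,
      ‖exp (t • s • K) * (s • B) * exp (-(t • s • K))‖ ≤ ‖s‖ * D := by
    intro t ht
    have hts : ‖(t : ℂ) * s‖ ≤ ‖s‖ := by
      rw [norm_mul, Complex.norm_of_nonneg ht.1]
      exact mul_le_of_le_one_left (norm_nonneg _) ht.2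
    rw [← smul_assoc, Complex.real_smul, mul_smul_comm, smul_mul_assoc, norm_smul]
    gcongr
    linarith [norm_conj_exp_etrunc_le_of_norm_le hH' hM hHad hs hts, norm_nonneg B]
  have hone : ‖(1 : V →L[ℂ] V)‖ ≤ 1 := ContinuousLinearMap.norm_id_le
  have h₁ := (norm_exp_add_mul_exp_neg_le (s • K) (s • B) hconj).trans
    (mul_le_of_le_one_left (Real.exp_pos _).le hone)
  have h₂ := (norm_exp_mul_exp_neg_add_le (s • K) (s • B) hconj).trans
    (mul_le_of_le_one_left (Real.exp_pos _).le hone)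
  rw [← smul_add] at h₁ h₂
  calc _ = ‖(exp (s • (K + B)) * exp (-(s • K))) * A * (exp (s • K) * exp (-(s • (K + B))))‖ := by
        simp only [mul_assoc]
    _ ≤ Real.exp (‖s‖ * D) * ‖A‖ * Real.exp (‖s‖ * D) := norm_mul₃_le.trans (by gcongr)
    _ = _ := by rw [mul_right_comm, ← Real.exp_add]; ring_nf

/-- Dyson-series bound for the truncated Hamiltonians `H̄' := etrunc H' M` and
`H̄ := H̄' + B`: for `|s| < S`,
`‖e^{sH̄} e^{−sH̄'} A e^{sH̄'} e^{−sH̄}‖ ≤ exp(2|s|(2‖B‖ + ‖B‖/(1−|s|/S)))·‖A‖`. -/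
theorem stmt_8 {V : Type*} [NormedAddCommGroup V] [InnerProductSpace ℂ V]
    [FiniteDimensional ℂ V]
    (H' B : V →L[ℂ] V) (hH' : IsSelfAdjoint H') (hB : IsSelfAdjoint B)
    (M : ℝ) (hM : ∀ μ : ℝ, Module.End.HasEigenvalue (↑H' : V →ₗ[ℂ] V) (μ : ℂ) → -M < μ)
    (S : ℝ) (hS : 0 < S)
    (hHad : ∀ s : ℂ, ‖s‖ < S →
      ‖NormedSpace.exp (s • H') * B * NormedSpace.exp (-(s • H'))‖ ≤
        ‖B‖ / (1 - ‖s‖ / S)) :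
    ∀ (s : ℂ), ‖s‖ < S → ∀ (A : V →L[ℂ] V),
      ‖NormedSpace.exp (s • (etrunc H' M + B)) * NormedSpace.exp (-(s • etrunc H' M)) *
          A *
          NormedSpace.exp (s • etrunc H' M) * NormedSpace.exp (-(s • (etrunc H' M + B)))‖ ≤
        Real.exp (2 * ‖s‖ * (2 * ‖B‖ + ‖B‖ / (1 - ‖s‖ / S))) * ‖A‖ :=
  stmt_8_general H' B hH' M hM S hHad
end

section
/- Let V be a finite-dimensional complex inner product space, let H' and B be self-adjoint linear endomorphisms of V, let M ∈ ℝ be such that every eigenvalue of H' is strictly greater than −M, and let λ > 0. Define H̄' := H'·E^{H'}((−M,M)) + M·E^{H'}([M,∞)) and H̄ := H̄' + B. Assume the complex Hadamard bound: for every s ∈ ℂ with |s| < 2λ, ‖e^{sH'}·B·e^{−sH'}‖ ≤ ‖B‖/(1 − |s|/(2λ)). Then for every ε ≥ 0 and every N > 0, ‖(id_V − E^{H̄'}((−N,N)))·E^{H̄}([−ε,ε])‖ ≤ 2√2·exp(−λ(N − 2ε − 10‖B‖)); in particular, taking N = M, ‖(id_V − E^{H'}((−M,M)))·E^{H̄}([−ε,ε])‖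 ≤ 2√2·exp(−λ(M − 2ε − 10‖B‖)). -/
/-!
Diagonalise `H'` in an orthonormal eigenbasis with eigenvalues `a i > -M`. Then `H̄'` is the
diagonal operator with entries `min (a i) M`, and exponentials and spectral projections of
diagonal operators are again diagonal. On the eigenvectors with `a i < M` the truncation does
nothing, and on the others `e^{tH̄'}` is the scalar `e^{tM}`; hence truncating costs at most one
extra `‖B‖`, and with the Hadamard bound `‖e^{tH̄'} B e^{-tH̄'}‖ ≤ 3‖B‖` for `0 ≤ t ≤ λ`.
Grönwall's inequality for `t ↦ e^{tH̄'} e^{-tH̄}` then yields `‖e^{λH̄'} e^{-λH̄}‖ ≤ e^{3λ‖B‖}`.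
Writing `P = E^{H̄'}([N,∞))` and `Q = E^{H̄}([-ε,ε])`, the factorisation
`P Q = (P e^{-λH̄'}) (e^{λH̄'} e^{-λH̄}) (e^{λH̄} Q)` gives `‖P Q‖ ≤ e^{-λN} e^{3λ‖B‖} e^{λε}`;
the part of the spectrum below `-N` is the same estimate for `(-H̄', -B)`.
-/
open NormedSpace Set

section BanachAlgebra

variable {𝔸 : Type*} [NormedRing 𝔸] [NormedAlgebra ℂ 𝔸] [CompleteSpace 𝔸]

theorem exp_neg_mul_exp (x : 𝔸) : exp (-x) * exp x = 1 := by
  rw [← exp_add_of_commute_of_mem_ball (𝕂 := ℂ) (Commute.refl x).neg_left, neg_add_cancel,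
    exp_zero] <;> simp [expSeries_radius_eq_top]

theorem norm_mul_le_exp_telescope (P Q X Y : 𝔸) :
    ‖P * Q‖ ≤ ‖P * exp (-X)‖ * ‖exp X * exp (-Y)‖ * ‖exp Y * Q‖ := by
  have : P * Q = P * exp (-X) * (exp X * exp (-Y)) * (exp Y * Q) := by
    simp only [mul_assoc]
    rw [← mul_assoc (exp (-X)), exp_neg_mul_exp, one_mul, ← mul_assoc (exp (-Y)),
      exp_neg_mul_exp, one_mul]
  exact this ▸ norm_mul₃_le

theorem norm_exp_smul_mul_exp_neg_smul_add_le (A B : 𝔸) {K lam : ℝ} (hlam : 0 ≤ lam)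
    (hK : ∀ t ∈ Icc 0 lam, ‖exp ((t : ℂ) • A) * B * exp (-((t : ℂ) • A))‖ ≤ K) :
    ‖exp ((lam : ℂ) • A) * exp (-((lam : ℂ) • (A + B)))‖ ≤ ‖(1 : 𝔸)‖ * Real.exp (K * lam) := by
  set f : ℝ → 𝔸 := fun t => exp ((t : ℂ) • A) * exp ((t : ℂ) • -(A + B))
  have hf (t : ℝ) :
      HasDerivAt f (-(exp ((t : ℂ) • A) * B * exp (-((t : ℂ) • A)) * f t)) t := by
    have h1 := (hasDerivAt_exp_smul_const A (t : ℂ)).scomp t Complex.ofRealCLM.hasDerivAt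
    have h2 := (hasDerivAt_exp_smul_const' (-(A + B)) (t : ℂ)).scomp t
      Complex.ofRealCLM.hasDerivAt
    convert h1.mul h2 using 1
    · rfl
    simp only [f, Function.comp_apply, Complex.ofRealCLM_apply, Complex.ofReal_one, one_smul]
    rw [← mul_assoc, mul_assoc (_ * B), exp_neg_mul_exp, mul_one]
    noncomm_ring
  have bound (t : ℝ) (ht : t ∈ Ico 0 lam) :
      ‖-(exp ((t : ℂ) • A) * B * exp (-((t : ℂ) • A)) * f t)‖ ≤ K * ‖f t‖ + 0 := by
    rw [norm_neg, add_zero]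
    exact (norm_mul_le _ _).trans
      (mul_le_mul_of_nonneg_right (hK t (Ico_subset_Icc_self ht)) (norm_nonneg _))
  have := norm_le_gronwallBound_of_norm_deriv_right_le
    (fun t _ => (hf t).continuousAt.continuousWithinAt)
    (fun t _ => (hf t).hasDerivWithinAt) (δ := ‖(1 : 𝔸)‖) (by simp [f]) bound lam ⟨hlam, le_rfl⟩
  rw [gronwallBound_ε0, sub_zero] at this
  simpa only [f, smul_neg] using this

end BanachAlgebra

theorem norm_conj_le_two_mul_of_hadamard {𝔸 : Type*} [NormedRing 𝔸] [NormedAlgebra ℂ 𝔸]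
    (H B : 𝔸) {lam : ℝ} (hlam : 0 < lam)
    (hHad : ∀ s : ℂ, ‖s‖ < 2 * lam →
      ‖exp (s • H) * B * exp (-(s • H))‖ ≤ ‖B‖ / (1 - ‖s‖ / (2 * lam)))
    {t : ℝ} (ht : t ∈ Icc 0 lam) :
    ‖exp ((t : ℂ) • H) * B * exp (-((t : ℂ) • H))‖ ≤ 2 * ‖B‖ := by
  have hs : ‖(t : ℂ)‖ = t := by simp [abs_of_nonneg ht.1]
  have hden : 1 / 2 ≤ 1 - t / (2 * lam) := by
    rw [le_sub_comm, div_le_iff₀ (by positivity)]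
    linarith [ht.2]
  calc _ ≤ ‖B‖ / (1 - t / (2 * lam)) := by
        simpa only [hs] using hHad t (by rw [hs]; linarith [ht.2])
    _ ≤ ‖B‖ / (1 / 2) := div_le_div_of_nonneg_left (norm_nonneg _) (by norm_num) hden
    _ = 2 * ‖B‖ := by ring

theorem norm_exp_neg_mul_mul_exp_eq {𝔸 : Type*} [NormedRing 𝔸] [StarRing 𝔸] [NormedStarGroup 𝔸]
    {x B : 𝔸} (hx : IsSelfAdjoint x) (hB : IsSelfAdjoint B) :
    ‖exp (-x) * B * exp x‖ = ‖exp x * B * exp (-x)‖ := by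
  rw [← norm_star, star_mul, star_mul, star_exp, star_exp, star_neg, hx.star_eq, hB.star_eq,
    mul_assoc]

section Diagonal

variable {V : Type*} [NormedAddCommGroup V] [InnerProductSpace ℂ V] [FiniteDimensional ℂ V]
  {ι : Type*} [Fintype ι] [DecidableEq ι]

noncomputable def diagonalOp (b : OrthonormalBasis ι ℂ V) : (ι → ℂ) →⋆ₐ[ℂ] (V →L[ℂ] V) :=
  b.repr.symm.conjStarAlgEquiv.toStarAlgHom.comp <|
    (Matrix.toEuclideanCLM : Matrix ι ι ℂ ≃⋆ₐ[ℂ] _).toStarAlgHom.comp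
      { Matrix.diagonalAlgHom ℂ with
        map_star' := fun g => (Matrix.diagonal_conjTranspose g).symm }

variable (b : OrthonormalBasis ι ℂ V)

theorem diagonalOp_apply_basis (g : ι → ℂ) (j : ι) : diagonalOp b g (b j) = g j • b j := by
  simp only [diagonalOp]
  change b.repr.symm (Matrix.toEuclideanCLM (n := ι) (𝕜 := ℂ) (Matrix.diagonal g)
    (b.repr (b j))) = _
  apply b.repr.injective
  ext i
  by_cases h : i = j <;> simp [h]

theorem norm_diagonalOp_le (g : ι → ℂ) : ‖diagonalOp b g‖ ≤ ‖g‖ :=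
  NonUnitalStarAlgHom.norm_apply_le _ _

theorem norm_diagonalOp_le_of_forall {g : ι → ℂ} {C : ℝ} (hC : 0 ≤ C) (h : ∀ i, ‖g i‖ ≤ C) :
    ‖diagonalOp b g‖ ≤ C :=
  (norm_diagonalOp_le b g).trans ((pi_norm_le_iff_of_nonneg hC).mpr h)

theorem exp_diagonalOp (g : ι → ℂ) :
    exp (diagonalOp b g) = diagonalOp b (fun i => Complex.exp (g i)) := by
  rw [← map_exp_of_mem_ball (𝕂 := ℂ) (diagonalOp b)
    (diagonalOp b).toLinearMap.continuous_of_finiteDimensional g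
    (by simp [expSeries_radius_eq_top])]
  congr 1
  ext i
  simp [Pi.coe_exp, Complex.exp_eq_exp_ℂ]

theorem exp_smul_diagonalOp_ofReal (s : ℝ) (c : ι → ℝ) :
    exp ((s : ℂ) • diagonalOp b fun i => (c i : ℂ)) =
      diagonalOp b fun i => (Real.exp (s * c i) : ℂ) := by
  rw [← map_smul, exp_diagonalOp]
  simp

theorem exp_neg_smul_diagonalOp_ofReal (s : ℝ) (c : ι → ℝ) :
    exp (-((s : ℂ) • diagonalOp b fun i => (c i : ℂ))) =
      diagonalOp b fun i => (Real.exp (-(s * c i)) : ℂ) := by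
  rw [← neg_smul, ← Complex.ofReal_neg, exp_smul_diagonalOp_ofReal]
  simp [neg_mul]

theorem isSelfAdjoint_diagonalOp_ofReal (c : ι → ℝ) :
    IsSelfAdjoint (diagonalOp b fun i => (c i : ℂ)) :=
  IsSelfAdjoint.map (funext fun i => Complex.conj_ofReal (c i)) _

theorem hasEigenvalue_diagonalOp (c : ι → ℝ) (i : ι) :
    Module.End.HasEigenvalue ((diagonalOp b fun i => (c i : ℂ) : V →L[ℂ] V) : V →ₗ[ℂ] V) (c i) :=
  Module.End.hasEigenvalue_of_hasEigenvector
    ⟨Module.End.mem_eigenspace_iff.mpr (diagonalOp_apply_basis b _ i), b.orthonormal.ne_zero i⟩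

theorem diagonalOp_apply_mem {S : Submodule ℂ V} {g : ι → ℂ} (h : ∀ i, g i ≠ 0 → b i ∈ S)
    (x : V) : diagonalOp b g x ∈ S := by
  rw [← b.sum_repr x, map_sum]
  refine S.sum_mem fun i _ => ?_
  rw [map_smul, diagonalOp_apply_basis, smul_smul]
  by_cases hi : g i = 0
  · simp [hi]
  · exact S.smul_mem _ (h i hi)

open Module.End in
theorem specProj_diagonalOp (c : ι → ℝ) (I : Set ℝ) :
    specProj (diagonalOp b fun i => (c i : ℂ)) I = diagonalOp b fun i => I.indicator 1 (c i) := by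
  set T := diagonalOp b fun i => (c i : ℂ)
  set K := ⨆ μ ∈ I, eigenspace (T : V →ₗ[ℂ] V) (μ : ℂ)
  have hT : (T : V →ₗ[ℂ] V).IsSymmetric :=
    (isSelfAdjoint_diagonalOp_ofReal b c).isSymmetric
  have hb (i : ι) : b i ∈ eigenspace (T : V →ₗ[ℂ] V) (c i) :=
    mem_eigenspace_iff.mpr (diagonalOp_apply_basis b _ i)
  have hK (i : ι) (hi : c i ∈ I) : b i ∈ K :=
    Submodule.mem_iSup_of_mem (c i) (Submodule.mem_iSup_of_mem hi (hb i))
  have hKperp (i : ι) (hi : c i ∉ I) : b i ∈ Kᗮ := by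
    have : K ⟂ eigenspace (T : V →ₗ[ℂ] V) (c i) :=
      Submodule.isOrtho_iSup_left.mpr fun μ => Submodule.isOrtho_iSup_left.mpr fun hμ =>
        hT.orthogonalFamily_eigenspaces.isOrtho (by rintro ⟨⟩; exact hi (by exact_mod_cast hμ))
    exact this.symm.le (hb i)
  ext x
  refine Submodule.eq_starProjection_of_mem_orthogonal (K := K) ?_ ?_
  · refine diagonalOp_apply_mem b (fun i hi => hK i ?_) x
    by_contra h
    simp [h] at hi
  · have : x - diagonalOp b (fun i => I.indicator 1 (c i)) x =
        diagonalOp b (1 - fun i => I.indicator 1 (c i)) x := by simp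
    rw [this]
    refine diagonalOp_apply_mem b (fun i hi => hKperp i ?_) _
    intro h
    simp [h] at hi

theorem etrunc_diagonalOp {c : ι → ℝ} {M : ℝ} (hc : ∀ i, -M < c i) :
    etrunc (diagonalOp b fun i => (c i : ℂ)) M = diagonalOp b fun i => ((min (c i) M : ℝ) : ℂ) := by
  rw [etrunc, specProj_diagonalOp, specProj_diagonalOp, ← map_mul, ← map_smul, ← map_add]
  congr 1
  ext i
  rcases lt_or_ge (c i) M with h | h
  · simp [indicator_of_mem (show c i ∈ Ioo (-M) M from ⟨hc i, h⟩), h.not_ge, h.le]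
  · simp [h]

theorem norm_conj_mul_diagonalOp_indicator_le {f φ : ι → ℝ} {S : Set ι}
    (hle : ∀ i, f i ≤ φ i) (heq : ∀ i ∈ S, f i = φ i) (B : V →L[ℂ] V) :
    ‖diagonalOp b (fun i => (Real.exp (f i) : ℂ)) * B *
        diagonalOp b (fun i => (Real.exp (-f i) : ℂ)) * diagonalOp b (S.indicator 1)‖ ≤
      ‖diagonalOp b (fun i => (Real.exp (φ i) : ℂ)) * B *
        diagonalOp b (fun i => (Real.exp (-φ i) : ℂ))‖ := by
  set E : (ι → ℝ) → V →L[ℂ] V := fun f => diagonalOp b fun i => (Real.exp (f i) : ℂ)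
  have hleft : E f = E (f - φ) * E φ := by
    simp only [E, ← map_mul]
    congr 1
    ext i
    simp [← Complex.exp_add]
  have hright : E (-f) * diagonalOp b (S.indicator 1) = E (-φ) * diagonalOp b (S.indicator 1) := by
    simp only [E, ← map_mul]
    congr 1
    ext i
    by_cases hi : i ∈ S <;> simp [hi, heq]
  have hE : ‖E (f - φ)‖ ≤ 1 :=
    norm_diagonalOp_le_of_forall b zero_le_one fun i => by simpa [Complex.norm_exp] using hle i
  have hS : ‖diagonalOp b (S.indicator 1)‖ ≤ 1 :=
    norm_diagonalOp_le_of_forall b zero_le_one fun i => by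
      by_cases hi : i ∈ S <;> simp [hi]
  change ‖E f * B * E (-f) * _‖ ≤ ‖E φ * B * E (-φ)‖
  calc ‖E f * B * E (-f) * diagonalOp b (S.indicator 1)‖
      = ‖E (f - φ) * (E φ * B * E (-φ)) * diagonalOp b (S.indicator 1)‖ := by
        rw [mul_assoc _ (E (-f)), hright, hleft]
        simp only [mul_assoc]
    _ ≤ 1 * ‖E φ * B * E (-φ)‖ * 1 := norm_mul₃_le.trans (by gcongr)
    _ = ‖E φ * B * E (-φ)‖ := by ring

theorem norm_conj_exp_smul_diagonalOp_min_le (a : ι → ℝ) (M : ℝ) {t : ℝ} (ht : 0 ≤ t)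
    (B : V →L[ℂ] V) :
    ‖exp ((t : ℂ) • diagonalOp b fun i => ((min (a i) M : ℝ) : ℂ)) * B *
        exp (-((t : ℂ) • diagonalOp b fun i => ((min (a i) M : ℝ) : ℂ)))‖ ≤
      ‖exp ((t : ℂ) • diagonalOp b fun i => (a i : ℂ)) * B *
        exp (-((t : ℂ) • diagonalOp b fun i => (a i : ℂ)))‖ + ‖B‖ := by
  simp only [exp_smul_diagonalOp_ofReal, exp_neg_smul_diagonalOp_ofReal]
  set X := diagonalOp b (fun i => (Real.exp (t * min (a i) M) : ℂ)) * B *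
    diagonalOp b (fun i => (Real.exp (-(t * min (a i) M)) : ℂ))
  set S := {i | a i < M}
  have hconst : diagonalOp b (fun _ => (Real.exp (t * M) : ℂ)) * B *
      diagonalOp b (fun _ => (Real.exp (-(t * M)) : ℂ)) = B := by
    have hscalar (x : ℝ) : diagonalOp b (fun _ => (Real.exp x : ℂ)) = (Real.exp x : ℂ) • 1 := by
      rw [← map_one (diagonalOp b), ← map_smul]
      congr 1
      ext
      simp
    rw [hscalar, hscalar, smul_mul_assoc, one_mul, mul_smul_comm, mul_one, smul_smul,
      ← Complex.ofReal_mul, ← Real.exp_add, neg_add_cancel, Real.exp_zero, Complex.ofReal_one,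
      one_smul]
  calc ‖X‖ = ‖X * diagonalOp b (S.indicator 1) + X * diagonalOp b (Sᶜ.indicator 1)‖ := by
        rw [← mul_add, ← map_add, indicator_self_add_compl, map_one, mul_one]
    _ ≤ _ := norm_add_le _ _
    _ ≤ _ := add_le_add
        (norm_conj_mul_diagonalOp_indicator_le b
          (fun i => mul_le_mul_of_nonneg_left (min_le_left _ _) ht)
          (fun i (hi : a i < M) => by simp [hi.le]) B)
        ((norm_conj_mul_diagonalOp_indicator_le b (φ := fun _ => t * M)
          (fun i => mul_le_mul_of_nonneg_left (min_le_right _ _) ht)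
          (fun i (hi : ¬a i < M) => by simp [not_lt.mp hi]) B).trans_eq (congrArg _ hconst))

end Diagonal

section SelfAdjoint

variable {V : Type*} [NormedAddCommGroup V] [InnerProductSpace ℂ V] [FiniteDimensional ℂ V]

theorem IsSelfAdjoint.exists_eq_diagonalOp {T : V →L[ℂ] V} (hT : IsSelfAdjoint T) :
    ∃ (b : OrthonormalBasis (Fin (Module.finrank ℂ V)) ℂ V) (c : Fin (Module.finrank ℂ V) → ℝ),
      T = diagonalOp b fun i => (c i : ℂ) := by
  have hsym := hT.isSymmetric
  refine ⟨hsym.eigenvectorBasis rfl, hsym.eigenvalues rfl,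
    ContinuousLinearMap.coe_injective <| (hsym.eigenvectorBasis rfl).toBasis.ext fun i => ?_⟩
  simp [diagonalOp_apply_basis, hsym.apply_eigenvectorBasis]

theorem norm_specProj_le (T : V →L[ℂ] V) (I : Set ℝ) : ‖specProj T I‖ ≤ 1 :=
  Submodule.starProjection_norm_le _

theorem specProj_empty {T : V →L[ℂ] V} (hT : IsSelfAdjoint T) : specProj T ∅ = 0 := by
  obtain ⟨b, c, rfl⟩ := hT.exists_eq_diagonalOp
  simp [specProj_diagonalOp, ← Pi.zero_def]

theorem specProj_compl {T : V →L[ℂ] V} (hT : IsSelfAdjoint T) (I : Set ℝ) :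
    specProj T Iᶜ = 1 - specProj T I := by
  obtain ⟨b, c, rfl⟩ := hT.exists_eq_diagonalOp
  rw [specProj_diagonalOp, specProj_diagonalOp, ← map_one (diagonalOp b), ← map_sub]
  congr 1
  ext i
  simp [indicator_compl]

theorem specProj_union {T : V →L[ℂ] V} (hT : IsSelfAdjoint T) {I J : Set ℝ} (hIJ : Disjoint I J) :
    specProj T (I ∪ J) = specProj T I + specProj T J := by
  obtain ⟨b, c, rfl⟩ := hT.exists_eq_diagonalOp
  simp only [specProj_diagonalOp, ← map_add, indicator_union_of_disjoint hIJ]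
  rfl

theorem specProj_neg {T : V →L[ℂ] V} (hT : IsSelfAdjoint T) (I : Set ℝ) :
    specProj (-T) I = specProj T (-I) := by
  obtain ⟨b, c, rfl⟩ := hT.exists_eq_diagonalOp
  rw [← map_neg, show (-fun i => (c i : ℂ)) = fun i => ((-c i : ℝ) : ℂ) by ext; simp,
    specProj_diagonalOp, specProj_diagonalOp]
  congr 1

theorem commute_exp_smul_specProj {T : V →L[ℂ] V} (hT : IsSelfAdjoint T) (s : ℝ) (I : Set ℝ) :
    Commute (exp ((s : ℂ) • T)) (specProj T I) := by
  obtain ⟨b, c, rfl⟩ := hT.exists_eq_diagonalOp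
  rw [exp_smul_diagonalOp_ofReal, specProj_diagonalOp]
  exact (Commute.all _ _).map (diagonalOp b)

theorem norm_specProj_mul_exp_smul_le_s10 {T : V →L[ℂ] V} (hT : IsSelfAdjoint T) (s : ℝ)
    {I : Set ℝ} {C : ℝ} (h : ∀ x ∈ I, s * x ≤ C) :
    ‖specProj T I * exp ((s : ℂ) • T)‖ ≤ Real.exp C := by
  obtain ⟨b, c, rfl⟩ := hT.exists_eq_diagonalOp
  rw [exp_smul_diagonalOp_ofReal, specProj_diagonalOp, ← map_mul]
  refine norm_diagonalOp_le_of_forall b (Real.exp_pos C).le fun i => ?_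
  by_cases hi : c i ∈ I
  · simpa [hi, Complex.norm_exp] using h _ hi
  · simp [hi, (Real.exp_pos C).le]

theorem specProj_etrunc_Ioo {T : V →L[ℂ] V} (hT : IsSelfAdjoint T) {M : ℝ}
    (hM : ∀ μ : ℝ, Module.End.HasEigenvalue (T : V →ₗ[ℂ] V) μ → -M < μ) :
    specProj (etrunc T M) (Ioo (-M) M) = specProj T (Ioo (-M) M) := by
  obtain ⟨b, c, rfl⟩ := hT.exists_eq_diagonalOp
  rw [etrunc_diagonalOp b fun i => hM _ (hasEigenvalue_diagonalOp b c i), specProj_diagonalOp,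
    specProj_diagonalOp]
  congr 1
  ext i
  rcases lt_or_ge (c i) M with h | h
  · simp [h.le]
  · simp [h]

theorem norm_specProj_Ici_mul_specProj_Icc_le {A B : V →L[ℂ] V} (hA : IsSelfAdjoint A)
    (hAB : IsSelfAdjoint (A + B)) {K lam : ℝ} (hlam : 0 ≤ lam)
    (hK : ∀ t ∈ Icc 0 lam, ‖exp ((t : ℂ) • A) * B * exp (-((t : ℂ) • A))‖ ≤ K) (N ε : ℝ) :
    ‖specProj A (Ici N) * specProj (A + B) (Icc (-ε) ε)‖ ≤
      Real.exp (-(lam * N) + K * lam + lam * ε) := by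
  have hP : ‖specProj A (Ici N) * exp (-((lam : ℂ) • A))‖ ≤ Real.exp (-(lam * N)) := by
    rw [← neg_smul, ← Complex.ofReal_neg]
    exact norm_specProj_mul_exp_smul_le_s10 hA _ fun x (hx : N ≤ x) => by nlinarith
  have hG : ‖exp ((lam : ℂ) • A) * exp (-((lam : ℂ) • (A + B)))‖ ≤ Real.exp (K * lam) :=
    (norm_exp_smul_mul_exp_neg_smul_add_le A B hlam hK).trans
      (mul_le_of_le_one_left (Real.exp_pos _).le ContinuousLinearMap.norm_id_le)
  have hQ : ‖exp ((lam : ℂ) • (A + B)) * specProj (A + B) (Icc (-ε) ε)‖ ≤ Real.exp (lam * ε) := by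
    rw [(commute_exp_smul_specProj hAB lam _).eq]
    exact norm_specProj_mul_exp_smul_le_s10 hAB _ fun x hx => mul_le_mul_of_nonneg_left hx.2 hlam
  calc _ ≤ _ := norm_mul_le_exp_telescope _ _ ((lam : ℂ) • A) ((lam : ℂ) • (A + B))
    _ ≤ Real.exp (-(lam * N)) * Real.exp (K * lam) * Real.exp (lam * ε) := by gcongr
    _ = _ := by rw [← Real.exp_add, ← Real.exp_add]

theorem norm_one_sub_specProj_Ioo_mul_specProj_Icc_le {A B : V →L[ℂ] V} (hA : IsSelfAdjoint A)
    (hB : IsSelfAdjoint B) {K lam : ℝ} (hlam : 0 ≤ lam)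
    (hK : ∀ t ∈ Icc 0 lam, ‖exp ((t : ℂ) • A) * B * exp (-((t : ℂ) • A))‖ ≤ K) {N : ℝ}
    (hN : 0 < N) (ε : ℝ) :
    ‖(1 - specProj A (Ioo (-N) N)) * specProj (A + B) (Icc (-ε) ε)‖ ≤
      2 * Real.exp (-(lam * N) + K * lam + lam * ε) := by
  have hAB := hA.add hB
  have hK' (t : ℝ) (ht : t ∈ Icc 0 lam) :
      ‖exp ((t : ℂ) • -A) * -B * exp (-((t : ℂ) • -A))‖ ≤ K := by
    rw [smul_neg, neg_neg, mul_neg, neg_mul, norm_neg,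
      norm_exp_neg_mul_mul_exp_eq (.smul (Complex.conj_ofReal t) hA) hB]
    exact hK t ht
  have hlow := norm_specProj_Ici_mul_specProj_Icc_le hA.neg (neg_add A B ▸ hAB.neg) hlam hK' N ε
  rw [← neg_add, specProj_neg hA, specProj_neg hAB, neg_Ici, neg_Icc, neg_neg] at hlow
  rw [← specProj_compl hA, ← Ioi_inter_Iio, compl_inter, compl_Ioi, compl_Iio,
    specProj_union hA (Iic_disjoint_Ioi le_rfl |>.mono_right (Ici_subset_Ioi.mpr (by linarith))),
    add_mul]
  calc _ ≤ _ := norm_add_le _ _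
    _ ≤ _ := add_le_add hlow (norm_specProj_Ici_mul_specProj_Icc_le hA hAB hlam hK N ε)
    _ = _ := by ring

theorem norm_one_sub_specProj_etrunc_mul_specProj_le {H B : V →L[ℂ] V} (hH : IsSelfAdjoint H)
    (hB : IsSelfAdjoint B) {M : ℝ}
    (hM : ∀ μ : ℝ, Module.End.HasEigenvalue (H : V →ₗ[ℂ] V) μ → -M < μ) {lam : ℝ} (hlam : 0 < lam)
    (hHad : ∀ s : ℂ, ‖s‖ < 2 * lam →
      ‖exp (s • H) * B * exp (-(s • H))‖ ≤ ‖B‖ / (1 - ‖s‖ / (2 * lam)))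
    {N : ℝ} (hN : 0 < N) (ε : ℝ) :
    ‖(1 - specProj (etrunc H M) (Ioo (-N) N)) * specProj (etrunc H M + B) (Icc (-ε) ε)‖ ≤
      2 * Real.exp (-(lam * N) + 3 * ‖B‖ * lam + lam * ε) := by
  obtain ⟨b, a, rfl⟩ := hH.exists_eq_diagonalOp
  rw [etrunc_diagonalOp b fun i => hM _ (hasEigenvalue_diagonalOp b a i)]
  refine norm_one_sub_specProj_Ioo_mul_specProj_Icc_le (isSelfAdjoint_diagonalOp_ofReal b _) hB
    hlam.le (fun t ht => ?_) hN ε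
  linarith [norm_conj_exp_smul_diagonalOp_min_le b a M ht.1 B,
    norm_conj_le_two_mul_of_hadamard _ B hlam hHad ht]

end SelfAdjoint

/-- Overlap estimate for the truncated Hamiltonians `H̄' := etrunc H' M`,
`H̄ := H̄' + B`: for `ε ≥ 0` and `N > 0`,
`‖(I − E^{H̄'}((−N,N)))·E^{H̄}([−ε,ε])‖ ≤ 2√2 e^{−λ(N−2ε−10‖B‖)}`; in particular,
taking `N = M`, `‖(I − E^{H'}((−M,M)))·E^{H̄}([−ε,ε])‖ ≤ 2√2 e^{−λ(M−2ε−10‖B‖)}`. -/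
theorem stmt_10 {V : Type*} [NormedAddCommGroup V] [InnerProductSpace ℂ V]
    [FiniteDimensional ℂ V]
    (H' B : V →L[ℂ] V) (hH' : IsSelfAdjoint H') (hB : IsSelfAdjoint B)
    (M : ℝ) (hM : ∀ μ : ℝ, Module.End.HasEigenvalue (↑H' : V →ₗ[ℂ] V) (μ : ℂ) → -M < μ)
    (lam : ℝ) (hlam : 0 < lam)
    (hHad : ∀ s : ℂ, ‖s‖ < 2 * lam →
      ‖NormedSpace.exp (s • H') * B * NormedSpace.exp (-(s • H'))‖ ≤
        ‖B‖ / (1 - ‖s‖ / (2 * lam))) :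
    (∀ (ε N : ℝ), 0 ≤ ε → 0 < N →
      ‖((1 : V →L[ℂ] V) - specProj (etrunc H' M) (Set.Ioo (-N) N)) *
          specProj (etrunc H' M + B) (Set.Icc (-ε) ε)‖ ≤
        2 * Real.sqrt 2 * Real.exp (-lam * (N - 2 * ε - 10 * ‖B‖))) ∧
    (∀ ε : ℝ, 0 ≤ ε →
      ‖((1 : V →L[ℂ] V) - specProj H' (Set.Ioo (-M) M)) *
          specProj (etrunc H' M + B) (Set.Icc (-ε) ε)‖ ≤
        2 * Real.sqrt 2 * Real.exp (-lam * (M - 2 * ε - 10 * ‖B‖))) := by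
  have hsqrt : (2 : ℝ) ≤ 2 * Real.sqrt 2 :=
    le_mul_of_one_le_right zero_le_two Real.one_lt_sqrt_two.le
  have hweaken (ε N : ℝ) (hε : 0 ≤ ε) :
      2 * Real.exp (-(lam * N) + 3 * ‖B‖ * lam + lam * ε) ≤
        2 * Real.sqrt 2 * Real.exp (-lam * (N - 2 * ε - 10 * ‖B‖)) := by
    gcongr ?_ * Real.exp ?_
    nlinarith [norm_nonneg B]
  have hbound {N : ℝ} (hN : 0 < N) (ε : ℝ) :=
    norm_one_sub_specProj_etrunc_mul_specProj_le hH' hB hM hlam hHad hN ε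
  refine ⟨fun ε N hε hN => (hbound hN ε).trans (hweaken ε N hε), fun ε hε => ?_⟩
  rcases lt_or_ge 0 M with hM0 | hM0
  · rw [← specProj_etrunc_Ioo hH' hM]
    exact (hbound hM0 ε).trans (hweaken ε M hε)
  · rw [Ioo_eq_empty (by linarith), specProj_empty hH', sub_zero, one_mul]
    refine (norm_specProj_le _ _).trans (one_le_mul_of_one_le_of_one_le (by linarith) ?_)
    exact Real.one_le_exp (by nlinarith [norm_nonneg B])
end

section
/- Let V be a finite-dimensional complex inner product space, let H be a self-adjoint linear endomorphism of V such that every eigenvalue of H lies in {0} ∪ [Δ,∞) for some Δ > 0 and the eigenspace of H for the eigenvalue 0 is one-dimensional, spanned by a unit vector Ω. Let W be a self-adjoint linear endomorphism of V with 0 < 2‖W‖ < Δ, set H̃ := H − W, and let Ω̃ be a unit vector spanning the range of E^{H̃}([−‖W‖, ‖W‖]) (this range is one-dimensional). Then √(1 − |⟨Ω, Ω̃⟩|²) ≤ ‖W‖ / (Δ − ‖W‖); moreover, if Ω̃ is chosen so that ⟨Ω, Ω̃⟩ ≥ 0, then ‖Ω − Ω̃‖ ≤ √2·‖W‖ / (Δ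 − ‖W‖). -/
open scoped ComplexOrder
open scoped InnerProductSpace
open Module.End RCLike

theorem Submodule.exists_mem_of_biSup_eq_span_singleton {K M ι : Type*} [DivisionRing K]
    [AddCommGroup M] [Module K M] {p : ι → Submodule K M} {s : Set ι} {v : M} (hv : v ≠ 0)
    (h : ⨆ i ∈ s, p i = K ∙ v) : ∃ i ∈ s, v ∈ p i := by
  by_contra! hvp
  have hbot : ∀ i ∈ s, p i = ⊥ := fun i hi => (Submodule.eq_bot_iff _).2 fun w hw => by
    have hw' : w ∈ K ∙ v := h ▸ (le_iSup₂ (f := fun i (_ : i ∈ s) => p i) i hi) hw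
    obtain ⟨t, rfl⟩ := mem_span_singleton.1 hw'
    rcases eq_or_ne t 0 with rfl | ht
    · exact zero_smul K v
    · exact absurd ((p i).smul_mem_iff ht |>.1 hw) (hvp i hi)
  exact hv <| span_singleton_eq_bot.1 <| h ▸ iSup₂_eq_bot.2 hbot

theorem range_specProj {V : Type*} [NormedAddCommGroup V] [InnerProductSpace ℂ V]
    [FiniteDimensional ℂ V] (T : V →L[ℂ] V) (I : Set ℝ) :
    LinearMap.range (specProj T I : V →ₗ[ℂ] V) = ⨆ μ ∈ I, eigenspace (T : V →ₗ[ℂ] V) (μ : ℂ) :=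
  Submodule.range_starProjection _

section InnerProductSpace

variable {𝕜 E : Type*} [RCLike 𝕜] [NormedAddCommGroup E] [InnerProductSpace 𝕜 E]

theorem norm_starProjection_orthogonal_singleton_sq {u : E} (hu : ‖u‖ = 1) (v : E) :
    ‖(𝕜 ∙ u)ᗮ.starProjection v‖ ^ 2 = ‖v‖ ^ 2 - ‖⟪u, v⟫_𝕜‖ ^ 2 := by
  have := Submodule.norm_sq_eq_add_norm_sq_projection v (𝕜 ∙ u)
  rw [Submodule.coe_norm, Submodule.coe_norm, ← Submodule.starProjection_apply,
    ← Submodule.starProjection_apply, Submodule.starProjection_unit_singleton 𝕜 hu, norm_smul,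
    hu, mul_one] at this
  linarith

namespace LinearMap.IsSymmetric

variable [FiniteDimensional 𝕜 E] {T : E →ₗ[𝕜] E}

theorem re_inner_map_self_eq_sum (hT : T.IsSymmetric) (x : E) :
    re ⟪x, T x⟫_𝕜 = ∑ i, hT.eigenvalues rfl i * ‖⟪hT.eigenvectorBasis rfl i, x⟫_𝕜‖ ^ 2 := by
  rw [← (hT.eigenvectorBasis rfl).sum_inner_mul_inner, map_sum]
  refine Finset.sum_congr rfl fun i _ => ?_
  rw [← hT, apply_eigenvectorBasis, inner_smul_real_left, mul_smul_comm, RCLike.smul_re,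
    inner_mul_symm_re_eq_norm, norm_mul, ← inner_conj_symm x, RCLike.norm_conj, sq]

theorem mul_norm_sq_le_re_inner_map_self (hT : T.IsSymmetric) {Δ : ℝ}
    (hspec : ∀ μ : ℝ, HasEigenvalue T μ → μ = 0 ∨ Δ ≤ μ) {x : E}
    (hx : x ∈ (eigenspace T 0)ᗮ) : Δ * ‖x‖ ^ 2 ≤ re ⟪x, T x⟫_𝕜 := by
  rw [hT.re_inner_map_self_eq_sum, ← (hT.eigenvectorBasis rfl).sum_sq_norm_inner_right,
    Finset.mul_sum]
  refine Finset.sum_le_sum fun i _ => ?_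
  rcases hspec _ (hT.hasEigenvalue_eigenvalues rfl i) with h | h
  · have hmem : hT.eigenvectorBasis rfl i ∈ eigenspace T 0 := by
      rw [mem_eigenspace_iff, apply_eigenvectorBasis, h, RCLike.ofReal_zero, zero_smul]
    simp [Submodule.inner_right_of_mem_orthogonal hmem hx, h]
  · gcongr

theorem sub_mul_norm_le_of_apply_eq (hT : T.IsSymmetric) {Δ : ℝ}
    (hspec : ∀ μ : ℝ, HasEigenvalue T μ → μ = 0 ∨ Δ ≤ μ) {p r w : E} {μ : ℝ}
    (hp : p ∈ eigenspace T 0) (hr : r ∈ (eigenspace T 0)ᗮ)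
    (heq : T (p + r) = (μ : 𝕜) • (p + r) + w) : (Δ - μ) * ‖r‖ ≤ ‖w‖ := by
  have hTp : T p = 0 := by simpa using mem_eigenspace_iff.1 hp
  have hTr : T r = (μ : 𝕜) • r + ((μ : 𝕜) • p + w) := by
    rw [← add_zero (T r), ← hTp, ← map_add, add_comm r, heq, smul_add]; abel
  have key : (Δ - μ) * ‖r‖ * ‖r‖ ≤ ‖w‖ * ‖r‖ := calc
    (Δ - μ) * ‖r‖ * ‖r‖ = Δ * ‖r‖ ^ 2 - μ * ‖r‖ ^ 2 := by ring
    _ ≤ re ⟪r, T r⟫_𝕜 - μ * ‖r‖ ^ 2 := by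
      gcongr; exact hT.mul_norm_sq_le_re_inner_map_self hspec hr
    _ = re ⟪r, w⟫_𝕜 := by
      rw [hTr, inner_add_right, inner_add_right, inner_smul_right, inner_smul_right,
        Submodule.inner_left_of_mem_orthogonal hp hr, mul_zero, zero_add, map_add, re_ofReal_mul,
        inner_self_eq_norm_sq]
      ring
    _ ≤ ‖w‖ * ‖r‖ := (re_inner_le_norm r w).trans_eq (mul_comm _ _)
  rcases (norm_nonneg r).eq_or_lt with h | h
  · rw [← h, mul_zero]; exact norm_nonneg w
  · exact le_of_mul_le_mul_right key h

end LinearMap.IsSymmetric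

end InnerProductSpace

theorem norm_sub_le_sqrt_two_mul_of_inner_nonneg {V : Type*} [NormedAddCommGroup V]
    [InnerProductSpace ℂ V] {u v : V} (hu : ‖u‖ = 1) (hv : ‖v‖ = 1) (huv : 0 ≤ ⟪u, v⟫_ℂ) :
    ‖u - v‖ ≤ √2 * √(1 - ‖⟪u, v⟫_ℂ‖ ^ 2) := by
  have hre : re ⟪u, v⟫_ℂ = ‖⟪u, v⟫_ℂ‖ := by
    simpa using congrArg Complex.re (Complex.norm_of_nonneg' huv).symm
  have hle : ‖⟪u, v⟫_ℂ‖ ≤ 1 := by simpa [hu, hv] using norm_inner_le_norm (𝕜 := ℂ) u v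
  rw [← Real.sqrt_mul zero_le_two, ← Real.sqrt_sq (norm_nonneg (u - v))]
  gcongr
  rw [@norm_sub_sq ℂ, hu, hv, hre]
  nlinarith [norm_nonneg ⟪u, v⟫_ℂ]

theorem stmt_19_general {V : Type*} [NormedAddCommGroup V] [InnerProductSpace ℂ V]
    [FiniteDimensional ℂ V]
    (H W : V →L[ℂ] V) (hH : IsSelfAdjoint H)
    (Δ : ℝ)
    (hspec : ∀ μ : ℝ, Module.End.HasEigenvalue (↑H : V →ₗ[ℂ] V) (μ : ℂ) →
      μ = 0 ∨ Δ ≤ μ)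
    (hWΔ : 2 * ‖W‖ < Δ)
    (Ω : V) (hΩunit : ‖Ω‖ = 1)
    (hΩ : Module.End.eigenspace (↑H : V →ₗ[ℂ] V) 0 = Submodule.span ℂ {Ω})
    (Ωt : V) (hΩtunit : ‖Ωt‖ = 1)
    (hΩt : LinearMap.range ((specProj (H - W) (Set.Icc (-‖W‖) ‖W‖)) : V →ₗ[ℂ] V) =
      Submodule.span ℂ {Ωt}) :
    Real.sqrt (1 - ‖(inner ℂ Ω Ωt : ℂ)‖ ^ 2) ≤ ‖W‖ / (Δ - ‖W‖) ∧
      (0 ≤ (inner ℂ Ω Ωt : ℂ) → ‖Ω - Ωt‖ ≤ Real.sqrt 2 * ‖W‖ / (Δ - ‖W‖)) := by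
  have hsym := ContinuousLinearMap.isSelfAdjoint_iff_isSymmetric.mp hH
  obtain ⟨μ, hμ, heig⟩ := Submodule.exists_mem_of_biSup_eq_span_singleton
    (norm_ne_zero_iff.mp (hΩtunit ▸ one_ne_zero)) ((range_specProj _ _).symm.trans hΩt)
  set p := (ℂ ∙ Ω).starProjection Ωt
  set r := (ℂ ∙ Ω)ᗮ.starProjection Ωt
  have hr : ‖r‖ ≤ ‖W‖ / (Δ - ‖W‖) := by
    have hp_ker : p ∈ eigenspace (H : V →ₗ[ℂ] V) 0 :=
      hΩ ▸ Submodule.starProjection_apply_mem _ Ωt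
    have hr_perp : r ∈ (eigenspace (H : V →ₗ[ℂ] V) 0)ᗮ :=
      hΩ ▸ Submodule.starProjection_apply_mem _ Ωt
    have heq : H (p + r) = (μ : ℂ) • (p + r) + W Ωt := by
      rw [Submodule.starProjection_add_starProjection_orthogonal, ← sub_eq_iff_eq_add]
      exact mem_eigenspace_iff.1 heig
    have hgap := hsym.sub_mul_norm_le_of_apply_eq hspec hp_ker hr_perp heq
    rw [le_div_iff₀ (by linarith [norm_nonneg W])]
    calc ‖r‖ * (Δ - ‖W‖) ≤ (Δ - μ) * ‖r‖ := by nlinarith [norm_nonneg r, hμ.2]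
      _ ≤ ‖W Ωt‖ := hgap
      _ ≤ ‖W‖ := by simpa [hΩtunit] using W.le_opNorm Ωt
  have hr_eq : ‖r‖ = √(1 - ‖⟪Ω, Ωt⟫_ℂ‖ ^ 2) := by
    have hpyth := norm_starProjection_orthogonal_singleton_sq (𝕜 := ℂ) hΩunit Ωt
    rw [hΩtunit, one_pow] at hpyth
    rw [← hpyth, Real.sqrt_sq (norm_nonneg r)]
  refine ⟨hr_eq ▸ hr, fun hc => ?_⟩
  calc ‖Ω - Ωt‖ ≤ √2 * √(1 - ‖⟪Ω, Ωt⟫_ℂ‖ ^ 2) :=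
        norm_sub_le_sqrt_two_mul_of_inner_nonneg hΩunit hΩtunit hc
    _ ≤ √2 * (‖W‖ / (Δ - ‖W‖)) := by gcongr; exact hr_eq ▸ hr
    _ = √2 * ‖W‖ / (Δ - ‖W‖) := (mul_div_assoc _ _ _).symm

/-- Ground-state overlap under range truncation: with `H` gapped (`{0} ∪ [Δ,∞)`)
with one-dimensional, `Ω`-spanned ground space, and `W` self-adjoint with
`0 < 2‖W‖ < Δ`, if `Ω̃` is a unit vector spanning the (one-dimensional) range of
`E^{H−W}([−‖W‖,‖W‖])`, then `√(1 − |⟨Ω,Ω̃⟩|²) ≤ ‖W‖/(Δ−‖W‖)`; moreover if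
`⟨Ω,Ω̃⟩ ≥ 0` then `‖Ω − Ω̃‖ ≤ √2·‖W‖/(Δ−‖W‖)`. -/
theorem stmt_19 {V : Type*} [NormedAddCommGroup V] [InnerProductSpace ℂ V]
    [FiniteDimensional ℂ V]
    (H W : V →L[ℂ] V) (hH : IsSelfAdjoint H) (hW : IsSelfAdjoint W)
    (Δ : ℝ) (hΔpos : 0 < Δ)
    (hspec : ∀ μ : ℝ, Module.End.HasEigenvalue (↑H : V →ₗ[ℂ] V) (μ : ℂ) →
      μ = 0 ∨ Δ ≤ μ)
    (h0simple : Module.finrank ℂ (Module.End.eigenspace (↑H : V →ₗ[ℂ] V) 0) = 1)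
    (hWpos : 0 < 2 * ‖W‖) (hWΔ : 2 * ‖W‖ < Δ)
    (Ω : V) (hΩunit : ‖Ω‖ = 1)
    (hΩ : Module.End.eigenspace (↑H : V →ₗ[ℂ] V) 0 = Submodule.span ℂ {Ω})
    (Ωt : V) (hΩtunit : ‖Ωt‖ = 1)
    (hΩt : LinearMap.range ((specProj (H - W) (Set.Icc (-‖W‖) ‖W‖)) : V →ₗ[ℂ] V) =
      Submodule.span ℂ {Ωt}) :
    Real.sqrt (1 - ‖(inner ℂ Ω Ωt : ℂ)‖ ^ 2) ≤ ‖W‖ / (Δ - ‖W‖) ∧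
      (0 ≤ (inner ℂ Ω Ωt : ℂ) → ‖Ω - Ωt‖ ≤ Real.sqrt 2 * ‖W‖ / (Δ - ‖W‖)) :=
  stmt_19_general H W hH Δ hspec hWΔ Ω hΩunit hΩ Ωt hΩtunit hΩt
end
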